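/- arXiv:2007.08419 — 11 statements merged into one kernel-verified Lean document; each statement's English description precedes it below -/
import Mathlib

section
/- Let G be a uniquely 2-divisible group and define x ∘ y = xy[y,x]^{1/2}, where [y,x] = y⁻¹x⁻¹yx. Then (G, ∘) is a commutative groupoid with identity element 1 (the group identity), and for every x ∈ G, the n-th power of x in (G,∘) coincides with xⁿ in G for all integers n. -/
/-- Iterated `∘`-powers with natural number exponent: `x ∘ (x ∘ (⋯ ∘ x))`. -/
def opowNat {G : Type*} [Group G] (op : G → G → G) (x : G) : ℕ → G
  | 0 => 1
  | n + 1 => op x (opowNat op x n)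

/-- `∘`-powers with integer exponent, negative powers being `∘`-powers of `x⁻¹`. -/
def opowInt {G : Type*} [Group G] (op : G → G → G) (x : G) : ℤ → G
  | Int.ofNat n => opowNat op x n
  | Int.negSucc n => opowNat op x⁻¹ (n + 1)

/-- Let `G` be a uniquely 2-divisible group and `x ∘ y = x y [y,x]^{1/2}`.  Then
`(G, ∘)` is a commutative groupoid with identity `1`, and powers in `(G,∘)`
coincide with powers in `G`. -/
theorem circ_comm_one_pow {G : Type*} [Group G] (sq : G → G)
    (hsq : ∀ a, sq a * sq a = a) (huniq : ∀ a b, b * b = a → b = sq a)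
    (op : G → G → G) (hop : ∀ x y, op x y = x * y * sq (y⁻¹ * x⁻¹ * y * x)) :
    (∀ x y : G, op x y = op y x) ∧
    (∀ x : G, op 1 x = x ∧ op x 1 = x) ∧
    (∀ (x : G) (n : ℤ), opowInt op x n = x ^ n) := by
  have sq_one : sq 1 = 1 := (huniq 1 1 (one_mul 1)).symm
  -- sq a commutes with a
  have comm : ∀ a : G, a * sq a = sq a * a := by
    intro a
    have e : (a * sq a * a⁻¹) * (a * sq a * a⁻¹) = a * (sq a * sq a) * a⁻¹ := by
      group
    rw [hsq a, mul_inv_cancel_right] at e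
    have h := huniq a _ e
    have h2 : a * sq a * a⁻¹ * a = sq a * a := by rw [h]
    rwa [inv_mul_cancel_right] at h2
  have key : ∀ c : G, sq c = c * sq c⁻¹ := by
    intro c
    have hc : c⁻¹ * sq c⁻¹ = sq c⁻¹ * c⁻¹ := comm c⁻¹
    have hc' : sq c⁻¹ * c = c * sq c⁻¹ := by
      have := congrArg (fun t => c * t * c) hc
      simpa [mul_assoc] using this
    have e : (c * sq c⁻¹) * (c * sq c⁻¹) = c := by
      calc (c * sq c⁻¹) * (c * sq c⁻¹) = c * (sq c⁻¹ * c) * sq c⁻¹ := by group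
        _ = c * (c * sq c⁻¹) * sq c⁻¹ := by rw [hc']
        _ = c * c * (sq c⁻¹ * sq c⁻¹) := by group
        _ = c * c * c⁻¹ := by rw [hsq]
        _ = c := by group
    exact (huniq c _ e).symm
  have hnat : ∀ (x : G) (n : ℕ), opowNat op x n = x ^ n := by
    intro x n
    induction n with
    | zero => simp [opowNat]
    | succ n ih =>
      rw [opowNat, ih, hop]
      have h1 : (x ^ n)⁻¹ * x⁻¹ * x ^ n * x = 1 := by
        have h := (Commute.self_pow x n).eq
        calc (x ^ n)⁻¹ * x⁻¹ * x ^ n * x = (x ^ n)⁻¹ * x⁻¹ * (x ^ n * x) := by group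
          _ = (x ^ n)⁻¹ * x⁻¹ * (x * x ^ n) := by rw [h]
          _ = 1 := by group
      rw [h1, sq_one, mul_one, ← pow_succ']
  refine ⟨?_, ?_, ?_⟩
  · intro x y
    rw [hop, hop, key (y⁻¹ * x⁻¹ * y * x)]
    have h2 : x⁻¹ * y⁻¹ * x * y = (y⁻¹ * x⁻¹ * y * x)⁻¹ := by group
    rw [h2]
    group
  · intro x
    constructor <;> simp [hop, sq_one]
  · intro x n
    cases n with
    | ofNat n => simpa [opowInt] using hnat x n
    | negSucc n => simp [opowInt, hnat, zpow_negSucc, inv_pow]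
end

section
/- Let G be a uniquely 2-divisible group with operation x ∘ y = xy[y,x]^{1/2}. Then every element of the center Z(G) of G lies in the center of (G, ∘); that is, if g ∈ Z(G) then g ∘ (x ∘ y) = (g ∘ x) ∘ y, x ∘ (g ∘ y) = (x ∘ g) ∘ y, and x ∘ (y ∘ g) = (x ∘ y) ∘ g for all x, y ∈ G. -/
/-- Let `G` be a uniquely 2-divisible group with `x ∘ y = x y [y,x]^{1/2}`.  Every
element of `Z(G)` lies in the center of the loop `(G, ∘)`. -/
theorem center_le_circ_center {G : Type*} [Group G] (sq : G → G)
    (hsq : ∀ a, sq a * sq a = a) (huniq : ∀ a b, b * b = a → b = sq a)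
    (op : G → G → G) (hop : ∀ x y, op x y = x * y * sq (y⁻¹ * x⁻¹ * y * x))
    (g : G) (hg : g ∈ Subgroup.center G) :
    ∀ x y : G,
      op g (op x y) = op (op g x) y ∧
      op x (op g y) = op (op x g) y ∧
      op x (op y g) = op (op x y) g := by
  have hc : ∀ b : G, b * g = g * b := fun b => Subgroup.mem_center_iff.mp hg b
  have h1 : sq 1 = 1 := (huniq 1 1 (by group)).symm
  have hconj : ∀ a : G, g⁻¹ * a * g = a := by
    intro a; rw [mul_assoc, hc a]; group
  have hcomm1 : ∀ a : G, a⁻¹ * g⁻¹ * a * g = 1 := by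
    intro a; rw [mul_assoc, hc a]; group
  have hcomm2 : ∀ a : G, g⁻¹ * a⁻¹ * g * a = 1 := by
    intro a; rw [mul_assoc, ← hc a]; group
  -- commutator-argument invariance lemmas
  have hargL : ∀ a b : G, (g * a)⁻¹ * b⁻¹ * (g * a) * b = a⁻¹ * b⁻¹ * a * b := by
    intro a b
    have h : (g * a)⁻¹ * b⁻¹ * (g * a) * b = a⁻¹ * (g⁻¹ * b⁻¹ * g) * a * b := by group
    rw [h, hconj b⁻¹]
  have hargR' : ∀ a b : G, b⁻¹ * (g * a)⁻¹ * b * (g * a) = b⁻¹ * a⁻¹ * b * a := by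
    intro a b
    have h : b⁻¹ * (g * a)⁻¹ * b * (g * a) = b⁻¹ * a⁻¹ * (g⁻¹ * b * g) * a := by group
    rw [h, hconj b]
  have hargR : ∀ a b : G, b⁻¹ * (a * g)⁻¹ * b * (a * g) = b⁻¹ * a⁻¹ * b * a := by
    intro a b; rw [hc a]; exact hargR' a b
  have hargL' : ∀ a b : G, (a * g)⁻¹ * b⁻¹ * (a * g) * b = a⁻¹ * b⁻¹ * a * b := by
    intro a b; rw [hc a]; exact hargL a b
  intro x y
  set s := sq (y⁻¹ * x⁻¹ * y * x) with hs
  refine ⟨?_, ?_, ?_⟩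
  · rw [hop x y, hop g x, hop g, hop]
    rw [hcomm1 (x * y * s), hcomm1 x, h1, mul_one, mul_one, hargR' x y, ← hs]
    group
  · rw [hop g y, hop x g, hop x, hop]
    rw [hcomm1 y, hcomm2 x, h1, mul_one, mul_one, hargL y x, hargR x y, ← hs]
    group
  · rw [hop y g, hop x y, hop x, hop]
    rw [hcomm2 y, hcomm2 (x * y * s), h1, mul_one, mul_one, hargL' y x, ← hs]
    have h : x * (y * g) * s = x * y * (g * s) := by group
    rw [h, ← hc s]
    group
end

section
/- Let G be a uniquely 2-divisible group. Then the identity xy[y,x]^{1/2} = (xy²x)^{1/2} holds for all x, y ∈ G if and only if G is 2-Engel (i.e., [x,y,y] = 1 for all x,y ∈ G). -/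
/-- Let `G` be a uniquely 2-divisible group.  Then `x y [y,x]^{1/2} = (x y² x)^{1/2}`
holds for all `x, y` iff `G` is 2-Engel, i.e. `[x,y,y] = 1` for all `x, y`
(commutators `[a,b] = a⁻¹b⁻¹ab`). -/
theorem sqrt_identity_iff_two_engel {G : Type*} [Group G] (sq : G → G)
    (hsq : ∀ a, sq a * sq a = a) (huniq : ∀ a b, b * b = a → b = sq a) :
    (∀ x y : G, x * y * sq (y⁻¹ * x⁻¹ * y * x) = sq (x * y * y * x)) ↔
    (∀ x y : G, (x⁻¹ * y⁻¹ * x * y)⁻¹ * y⁻¹ * (x⁻¹ * y⁻¹ * x * y) * y = 1) := by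
  constructor
  · intro h
    -- First: for all a b, the commutator [b,a] commutes with a*b.
    have comm : ∀ a b : G,
        (b⁻¹ * a⁻¹ * b * a) * (a * b) = (a * b) * (b⁻¹ * a⁻¹ * b * a) := by
      intro a b
      have hss : sq (b⁻¹ * a⁻¹ * b * a) * sq (b⁻¹ * a⁻¹ * b * a) = b⁻¹ * a⁻¹ * b * a :=
        hsq _
      generalize hs : sq (b⁻¹ * a⁻¹ * b * a) = s at *
      have e1 : (a * b * s) * (a * b * s) = a * b * b * a := by
        rw [← hs, h a b]; exact hsq _
      -- s * (a*b) * s = (a*b) * (s*s)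
      have e2 : s * (a * b) * s = (a * b) * (s * s) := by
        have l : (a * b) * (s * (a * b) * s) = (a * b * s) * (a * b * s) := by group
        have r : (a * b) * ((a * b) * (s * s)) = a * b * b * a := by
          rw [hss]; group
        exact mul_left_cancel (l.trans (e1.trans r.symm))
      have e3 : s * (a * b) = (a * b) * s := by
        refine mul_right_cancel (b := s) ?_
        rw [mul_assoc (a * b) s s]; exact e2
      calc (b⁻¹ * a⁻¹ * b * a) * (a * b) = s * (s * (a * b)) := by
            rw [← hss]; group
        _ = s * ((a * b) * s) := by rw [e3]
        _ = (s * (a * b)) * s := by group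
        _ = ((a * b) * s) * s := by rw [e3]
        _ = (a * b) * (b⁻¹ * a⁻¹ * b * a) := by rw [← hss]; group
    intro x y
    -- apply comm with a := y * x, b := x⁻¹ : get [y,x] commutes with y
    have key := comm (y * x) x⁻¹
    have key' : (y⁻¹ * x⁻¹ * y * x) * y = y * (y⁻¹ * x⁻¹ * y * x) := by
      have l : (y⁻¹ * x⁻¹ * y * x) * y
          = ((x⁻¹)⁻¹ * (y * x)⁻¹ * x⁻¹ * (y * x)) * ((y * x) * x⁻¹) := by group
      have r : ((y * x) * x⁻¹) * ((x⁻¹)⁻¹ * (y * x)⁻¹ * x⁻¹ * (y * x))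
          = y * (y⁻¹ * x⁻¹ * y * x) := by group
      rw [l, key, r]
    -- hence y⁻¹ and [y,x]⁻¹ commute
    have key2 : y⁻¹ * (y⁻¹ * x⁻¹ * y * x)⁻¹ = (y⁻¹ * x⁻¹ * y * x)⁻¹ * y⁻¹ := by
      rw [← mul_inv_rev, key', mul_inv_rev]
    calc (x⁻¹ * y⁻¹ * x * y)⁻¹ * y⁻¹ * (x⁻¹ * y⁻¹ * x * y) * y
        = (y⁻¹ * x⁻¹ * y * x) * (y⁻¹ * (y⁻¹ * x⁻¹ * y * x)⁻¹) * y := by group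
      _ = (y⁻¹ * x⁻¹ * y * x) * ((y⁻¹ * x⁻¹ * y * x)⁻¹ * y⁻¹) * y := by rw [key2]
      _ = 1 := by group
  · intro h x y
    -- 2-Engel: [a,b] commutes with b for all a,b
    have hc : ∀ a b : G, (a⁻¹ * b⁻¹ * a * b) * b = b * (a⁻¹ * b⁻¹ * a * b) := by
      intro a b
      have h0 := h a b
      have e : b⁻¹ * (a⁻¹ * b⁻¹ * a * b) * b = a⁻¹ * b⁻¹ * a * b := by
        calc b⁻¹ * (a⁻¹ * b⁻¹ * a * b) * b
            = (a⁻¹ * b⁻¹ * a * b)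
              * ((a⁻¹ * b⁻¹ * a * b)⁻¹ * b⁻¹ * (a⁻¹ * b⁻¹ * a * b) * b) := by group
          _ = (a⁻¹ * b⁻¹ * a * b) * 1 := by rw [h0]
          _ = a⁻¹ * b⁻¹ * a * b := mul_one _
      calc (a⁻¹ * b⁻¹ * a * b) * b = b * (b⁻¹ * (a⁻¹ * b⁻¹ * a * b) * b) := by group
        _ = b * (a⁻¹ * b⁻¹ * a * b) := by rw [e]
    -- c := y⁻¹x⁻¹yx commutes with x
    have hcx : (y⁻¹ * x⁻¹ * y * x) * x = x * (y⁻¹ * x⁻¹ * y * x) := hc y x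
    -- c commutes with y
    have hcy : (y⁻¹ * x⁻¹ * y * x) * y = y * (y⁻¹ * x⁻¹ * y * x) := by
      have h1 := hc x y
      calc (y⁻¹ * x⁻¹ * y * x) * y
          = (x⁻¹ * y⁻¹ * x * y)⁻¹ * (y * (x⁻¹ * y⁻¹ * x * y)) * (x⁻¹ * y⁻¹ * x * y)⁻¹ := by
            group
        _ = (x⁻¹ * y⁻¹ * x * y)⁻¹ * ((x⁻¹ * y⁻¹ * x * y) * y) * (x⁻¹ * y⁻¹ * x * y)⁻¹ := by
            rw [h1]
        _ = y * (y⁻¹ * x⁻¹ * y * x) := by group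
    -- c commutes with x*y
    have hcxy : (y⁻¹ * x⁻¹ * y * x) * (x * y) = (x * y) * (y⁻¹ * x⁻¹ * y * x) := by
      calc (y⁻¹ * x⁻¹ * y * x) * (x * y) = ((y⁻¹ * x⁻¹ * y * x) * x) * y := by group
        _ = (x * (y⁻¹ * x⁻¹ * y * x)) * y := by rw [hcx]
        _ = x * ((y⁻¹ * x⁻¹ * y * x) * y) := by group
        _ = x * (y * (y⁻¹ * x⁻¹ * y * x)) := by rw [hcy]
        _ = (x * y) * (y⁻¹ * x⁻¹ * y * x) := by group
    -- sq c commutes with x*y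
    have hsxy : sq (y⁻¹ * x⁻¹ * y * x) * (x * y)
        = (x * y) * sq (y⁻¹ * x⁻¹ * y * x) := by
      have ht : ((x * y)⁻¹ * sq (y⁻¹ * x⁻¹ * y * x) * (x * y))
          * ((x * y)⁻¹ * sq (y⁻¹ * x⁻¹ * y * x) * (x * y)) = y⁻¹ * x⁻¹ * y * x := by
        have e : ((x * y)⁻¹ * sq (y⁻¹ * x⁻¹ * y * x) * (x * y))
            * ((x * y)⁻¹ * sq (y⁻¹ * x⁻¹ * y * x) * (x * y))
            = (x * y)⁻¹ * ((sq (y⁻¹ * x⁻¹ * y * x) * sq (y⁻¹ * x⁻¹ * y * x)) * (x * y)) := by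
          group
        rw [e, hsq]
        calc (x * y)⁻¹ * ((y⁻¹ * x⁻¹ * y * x) * (x * y))
            = (x * y)⁻¹ * ((x * y) * (y⁻¹ * x⁻¹ * y * x)) := by rw [hcxy]
          _ = y⁻¹ * x⁻¹ * y * x := by group
      have hu := huniq _ _ ht
      calc sq (y⁻¹ * x⁻¹ * y * x) * (x * y)
          = (x * y) * ((x * y)⁻¹ * sq (y⁻¹ * x⁻¹ * y * x) * (x * y)) := by group
        _ = (x * y) * sq (y⁻¹ * x⁻¹ * y * x) := by rw [hu]
    -- finish via uniqueness of square roots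
    apply huniq
    have hss : sq (y⁻¹ * x⁻¹ * y * x) * sq (y⁻¹ * x⁻¹ * y * x) = y⁻¹ * x⁻¹ * y * x :=
      hsq _
    calc (x * y * sq (y⁻¹ * x⁻¹ * y * x)) * (x * y * sq (y⁻¹ * x⁻¹ * y * x))
        = x * y * ((sq (y⁻¹ * x⁻¹ * y * x) * (x * y)) * sq (y⁻¹ * x⁻¹ * y * x)) := by group
      _ = x * y * (((x * y) * sq (y⁻¹ * x⁻¹ * y * x)) * sq (y⁻¹ * x⁻¹ * y * x)) := by
          rw [hsxy]
      _ = x * y * ((x * y) * (sq (y⁻¹ * x⁻¹ * y * x) * sq (y⁻¹ * x⁻¹ * y * x))) := by group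
      _ = x * y * ((x * y) * (y⁻¹ * x⁻¹ * y * x)) := by rw [hss]
      _ = x * y * y * x := by group
end

section
/- Let G be a uniquely 2-divisible 2-Engel group. Then both x and y commute with [y,x], and consequently (xy[y,x]^{1/2})² = xy²x for all x, y ∈ G. -/
private lemma mycomm {G : Type*} [Group G] {a b : G}
    (h : a⁻¹ * b⁻¹ * a * b = 1) : b * a = a * b := by
  calc b * a = b * a * 1 := by group
    _ = b * a * (a⁻¹ * b⁻¹ * a * b) := by rw [h]
    _ = a * b := by group

/-- Let `G` be a uniquely 2-divisible 2-Engel group.  Then `x` and `y` commute with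
`[y,x] = y⁻¹x⁻¹yx`, and consequently `(x y [y,x]^{1/2})² = x y² x`. -/
theorem two_engel_sqrt_identity {G : Type*} [Group G] (sq : G → G)
    (hsq : ∀ a, sq a * sq a = a) (huniq : ∀ a b, b * b = a → b = sq a)
    (hengel : ∀ x y : G, (x⁻¹ * y⁻¹ * x * y)⁻¹ * y⁻¹ * (x⁻¹ * y⁻¹ * x * y) * y = 1) :
    ∀ x y : G,
      x * (y⁻¹ * x⁻¹ * y * x) = (y⁻¹ * x⁻¹ * y * x) * x ∧
      y * (y⁻¹ * x⁻¹ * y * x) = (y⁻¹ * x⁻¹ * y * x) * y ∧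
      (x * y * sq (y⁻¹ * x⁻¹ * y * x)) * (x * y * sq (y⁻¹ * x⁻¹ * y * x)) =
        x * y * y * x := by
  intro x y
  -- `c = [y,x] = y⁻¹x⁻¹yx` commutes with `x`
  have hcx : x * (y⁻¹ * x⁻¹ * y * x) = (y⁻¹ * x⁻¹ * y * x) * x := mycomm (hengel y x)
  -- `d = [x,y]` commutes with `y`
  have hdy : y * (x⁻¹ * y⁻¹ * x * y) = (x⁻¹ * y⁻¹ * x * y) * y := mycomm (hengel x y)
  -- hence `c = d⁻¹` commutes with `y`
  have hcy : y * (y⁻¹ * x⁻¹ * y * x) = (y⁻¹ * x⁻¹ * y * x) * y := by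
    calc y * (y⁻¹ * x⁻¹ * y * x)
        = (x⁻¹ * y⁻¹ * x * y)⁻¹ * ((x⁻¹ * y⁻¹ * x * y) * y) * (x⁻¹ * y⁻¹ * x * y)⁻¹ := by
          group
      _ = (x⁻¹ * y⁻¹ * x * y)⁻¹ * (y * (x⁻¹ * y⁻¹ * x * y)) * (x⁻¹ * y⁻¹ * x * y)⁻¹ := by
          rw [hdy]
      _ = (y⁻¹ * x⁻¹ * y * x) * y := by group
  refine ⟨hcx, hcy, ?_⟩
  have hss : sq (y⁻¹ * x⁻¹ * y * x) * sq (y⁻¹ * x⁻¹ * y * x) = y⁻¹ * x⁻¹ * y * x :=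
    hsq _
  -- the square root commutes with `x`
  have hsx : sq (y⁻¹ * x⁻¹ * y * x) * x = x * sq (y⁻¹ * x⁻¹ * y * x) := by
    have h4 : (x⁻¹ * sq (y⁻¹ * x⁻¹ * y * x) * x) * (x⁻¹ * sq (y⁻¹ * x⁻¹ * y * x) * x)
        = y⁻¹ * x⁻¹ * y * x := by
      calc (x⁻¹ * sq (y⁻¹ * x⁻¹ * y * x) * x) * (x⁻¹ * sq (y⁻¹ * x⁻¹ * y * x) * x)
          = x⁻¹ * (sq (y⁻¹ * x⁻¹ * y * x) * sq (y⁻¹ * x⁻¹ * y * x)) * x := by group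
        _ = x⁻¹ * (y⁻¹ * x⁻¹ * y * x) * x := by rw [hss]
        _ = x⁻¹ * ((y⁻¹ * x⁻¹ * y * x) * x) := by group
        _ = x⁻¹ * (x * (y⁻¹ * x⁻¹ * y * x)) := by rw [hcx]
        _ = y⁻¹ * x⁻¹ * y * x := by group
    have h5 := huniq _ _ h4
    calc sq (y⁻¹ * x⁻¹ * y * x) * x
        = x * (x⁻¹ * sq (y⁻¹ * x⁻¹ * y * x) * x) := by group
      _ = x * sq (y⁻¹ * x⁻¹ * y * x) := by rw [h5]
  -- the square root commutes with `y`
  have hsy : sq (y⁻¹ * x⁻¹ * y * x) * y = y * sq (y⁻¹ * x⁻¹ * y * x) := by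
    have h4 : (y⁻¹ * sq (y⁻¹ * x⁻¹ * y * x) * y) * (y⁻¹ * sq (y⁻¹ * x⁻¹ * y * x) * y)
        = y⁻¹ * x⁻¹ * y * x := by
      calc (y⁻¹ * sq (y⁻¹ * x⁻¹ * y * x) * y) * (y⁻¹ * sq (y⁻¹ * x⁻¹ * y * x) * y)
          = y⁻¹ * (sq (y⁻¹ * x⁻¹ * y * x) * sq (y⁻¹ * x⁻¹ * y * x)) * y := by group
        _ = y⁻¹ * (y⁻¹ * x⁻¹ * y * x) * y := by rw [hss]
        _ = y⁻¹ * ((y⁻¹ * x⁻¹ * y * x) * y) := by group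
        _ = y⁻¹ * (y * (y⁻¹ * x⁻¹ * y * x)) := by rw [hcy]
        _ = y⁻¹ * x⁻¹ * y * x := by group
    have h5 := huniq _ _ h4
    calc sq (y⁻¹ * x⁻¹ * y * x) * y
        = y * (y⁻¹ * sq (y⁻¹ * x⁻¹ * y * x) * y) := by group
      _ = y * sq (y⁻¹ * x⁻¹ * y * x) := by rw [h5]
  calc (x * y * sq (y⁻¹ * x⁻¹ * y * x)) * (x * y * sq (y⁻¹ * x⁻¹ * y * x))
      = x * y * (sq (y⁻¹ * x⁻¹ * y * x) * x) * y * sq (y⁻¹ * x⁻¹ * y * x) := by group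
    _ = x * y * (x * sq (y⁻¹ * x⁻¹ * y * x)) * y * sq (y⁻¹ * x⁻¹ * y * x) := by rw [hsx]
    _ = x * y * x * (sq (y⁻¹ * x⁻¹ * y * x) * y) * sq (y⁻¹ * x⁻¹ * y * x) := by group
    _ = x * y * x * (y * sq (y⁻¹ * x⁻¹ * y * x)) * sq (y⁻¹ * x⁻¹ * y * x) := by rw [hsy]
    _ = x * y * x * y * (sq (y⁻¹ * x⁻¹ * y * x) * sq (y⁻¹ * x⁻¹ * y * x)) := by group
    _ = x * y * x * y * (y⁻¹ * x⁻¹ * y * x) := by rw [hss]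
    _ = x * y * y * x := by group
end

section
/- Let G be a uniquely 2-divisible group and define x ∘ y = xy[y,x]^{1/2}. If (G, ∘) satisfies the left inverse property ((x⁻¹) ∘ (x ∘ y) = y for all x,y, where x⁻¹ is the group inverse), then G is 2-Engel. -/
/-- Purely equational group computation: if `s² = [y,x]` and the LIP-derived
identity holds, then `s` commutes with `x`. -/
lemma lip_aux {G : Type*} [Group G] (x y s T : G)
    (h1 : s * s = y⁻¹ * x⁻¹ * y * x)
    (h2 : T * T = (x * y * s)⁻¹ * x⁻¹⁻¹ * (x * y * s) * x⁻¹)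
    (h3 : x⁻¹ * (x * y * s) * T = y) : x * s = s * x := by
  -- From h3: T = s⁻¹
  have h4 : (y * s) * T = y := by
    calc (y * s) * T = x⁻¹ * (x * y * s) * T := by group
    _ = y := h3
  have hT : T = s⁻¹ := by
    apply mul_left_cancel (a := y * s)
    rw [h4]; group
  rw [hT] at h2
  -- h2 : s⁻¹ * s⁻¹ = (x*y*s)⁻¹ * x⁻¹⁻¹ * (x*y*s) * x⁻¹
  have H1' : y⁻¹ * x * y * s * x⁻¹ = s⁻¹ := by
    apply mul_left_cancel (a := s⁻¹)
    rw [h2]; group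
  have E1 : x * y * s = y * s⁻¹ * x := by
    rw [← H1']; group
  have E2 : x * y * s * s = y * x := by
    rw [show x * y * s * s = x * y * (s * s) by group, h1]; group
  have E3 : y * s⁻¹ * x * s = y * x := by rw [← E1]; exact E2
  have E4 : s⁻¹ * (x * s) = x := by
    apply mul_left_cancel (a := y)
    rw [show y * (s⁻¹ * (x * s)) = y * s⁻¹ * x * s by group, E3]
  calc x * s = s * (s⁻¹ * (x * s)) := by group
  _ = s * x := by rw [E4]

/-- Let `G` be uniquely 2-divisible with `x ∘ y = x y [y,x]^{1/2}`.  If `(G,∘)`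
satisfies the left inverse property `x⁻¹ ∘ (x ∘ y) = y`, then `G` is 2-Engel. -/
theorem lip_implies_two_engel {G : Type*} [Group G] (sq : G → G)
    (hsq : ∀ a, sq a * sq a = a) (huniq : ∀ a b, b * b = a → b = sq a)
    (op : G → G → G) (hop : ∀ x y, op x y = x * y * sq (y⁻¹ * x⁻¹ * y * x))
    (hlip : ∀ x y : G, op x⁻¹ (op x y) = y) :
    ∀ x y : G, (x⁻¹ * y⁻¹ * x * y)⁻¹ * y⁻¹ * (x⁻¹ * y⁻¹ * x * y) * y = 1 := by
  have key : ∀ x y : G, x * sq (y⁻¹ * x⁻¹ * y * x) = sq (y⁻¹ * x⁻¹ * y * x) * x := by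
    intro x y
    have h := hlip x y
    rw [hop x y, hop x⁻¹] at h
    exact lip_aux x y (sq (y⁻¹ * x⁻¹ * y * x)) _ (hsq _) (hsq _) h
  intro x y
  have ht := key y x
  -- ht : y * sq (x⁻¹ * y⁻¹ * x * y) = sq (x⁻¹ * y⁻¹ * x * y) * y
  have h2 := hsq (x⁻¹ * y⁻¹ * x * y)
  have hc : y * (x⁻¹ * y⁻¹ * x * y) = (x⁻¹ * y⁻¹ * x * y) * y := by
    calc y * (x⁻¹ * y⁻¹ * x * y)
        = y * (sq (x⁻¹ * y⁻¹ * x * y) * sq (x⁻¹ * y⁻¹ * x * y)) := by rw [h2]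
    _ = (y * sq (x⁻¹ * y⁻¹ * x * y)) * sq (x⁻¹ * y⁻¹ * x * y) := by group
    _ = (sq (x⁻¹ * y⁻¹ * x * y) * y) * sq (x⁻¹ * y⁻¹ * x * y) := by rw [ht]
    _ = sq (x⁻¹ * y⁻¹ * x * y) * (y * sq (x⁻¹ * y⁻¹ * x * y)) := by group
    _ = sq (x⁻¹ * y⁻¹ * x * y) * (sq (x⁻¹ * y⁻¹ * x * y) * y) := by rw [ht]
    _ = (x⁻¹ * y⁻¹ * x * y) * y := by rw [← mul_assoc, h2]
  calc (x⁻¹ * y⁻¹ * x * y)⁻¹ * y⁻¹ * (x⁻¹ * y⁻¹ * x * y) * y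
      = (x⁻¹ * y⁻¹ * x * y)⁻¹ * y⁻¹ * (y * (x⁻¹ * y⁻¹ * x * y)) := by rw [hc]; group
  _ = 1 := by group
end

section
/- Let G be a uniquely 2-divisible group in which every element has odd order, acted on by elements x, y. If the operation x ∘ y = xy[y,x]^{1/2} makes (G, ∘) an abelian group, then G is nilpotent of class at most 2. -/
set_option linter.unusedSectionVars false

namespace CircAux

variable {G : Type*} [Group G]

/-- commutator `[a,b] = a⁻¹ b⁻¹ a b` -/
def br (a b : G) : G := a⁻¹ * b⁻¹ * a * b

lemma br_def (a b : G) : br a b = a⁻¹ * b⁻¹ * a * b := rfl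

lemma h_br_inv (a b : G) : br a b = (br b a)⁻¹ := by simp only [br_def]; group

lemma br_mul_left (u v g : G) : br (u * v) g = v⁻¹ * br u g * v * br v g := by
  simp only [br_def]; group

lemma br_mul_right (u a b : G) : br u (a * b) = br u b * (b⁻¹ * br u a * b) := by
  simp only [br_def]; group

lemma br_conj (u v : G) : v⁻¹ * u * v = u * br u v := by simp only [br_def]; group

lemma my_conj_eq {u v : G} (h : Commute u v) : v⁻¹ * u * v = u := by
  calc v⁻¹ * u * v = v⁻¹ * (u * v) := by group
    _ = v⁻¹ * (v * u) := by rw [h.eq]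
    _ = u := by group

lemma my_conj_comm {u v : G} (g : G) (h : Commute u v) :
    Commute (g⁻¹ * u * g) (g⁻¹ * v * g) := by
  show _ * _ = _ * _
  calc (g⁻¹ * u * g) * (g⁻¹ * v * g) = g⁻¹ * (u * v) * g := by group
    _ = g⁻¹ * (v * u) * g := by rw [h.eq]
    _ = (g⁻¹ * v * g) * (g⁻¹ * u * g) := by group

variable (sq : G → G) (op : G → G → G)
variable (hsq : ∀ a : G, sq a * sq a = a) (huniq : ∀ a b : G, b * b = a → b = sq a)
variable (hodd : ∀ g : G, Odd (orderOf g))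
variable (hop : ∀ x y, op x y = x * y * sq (y⁻¹ * x⁻¹ * y * x))
variable (hcomm : ∀ x y : G, op x y = op y x)
variable (hassoc : ∀ x y z : G, op (op x y) z = op x (op y z))

section Basic
include huniq

lemma my_sq_eq {a b : G} (h : b * b = a) : sq a = b := (huniq a b h).symm

lemma my_sq_one : sq (1 : G) = 1 := my_sq_eq sq huniq (one_mul 1)

include hsq in
lemma my_sq_inv (a : G) : sq a⁻¹ = (sq a)⁻¹ :=
  my_sq_eq sq huniq (by rw [← mul_inv_rev, hsq])

include hodd in
lemma my_sq_pow (a : G) : sq a = a ^ ((orderOf a + 1) / 2) := by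
  obtain ⟨k, hk⟩ := hodd a
  have h1 : a ^ (orderOf a + 1) = a := by rw [pow_succ, pow_orderOf_eq_one, one_mul]
  have h2 : (orderOf a + 1) / 2 = k + 1 := by omega
  rw [h2]
  apply my_sq_eq sq huniq
  rw [← pow_add, show k + 1 + (k + 1) = orderOf a + 1 by omega, h1]

include hodd in
lemma my_commute_sq {b a : G} (h : Commute b a) : Commute b (sq a) := by
  rw [my_sq_pow sq huniq hodd a]; exact h.pow_right _

include hsq hodd in
lemma my_sq_mul {a b : G} (h : Commute a b) : sq (a * b) = sq a * sq b := by
  have hab : Commute (sq a) (sq b) :=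
    my_commute_sq sq huniq hodd ((my_commute_sq sq huniq hodd h.symm).symm)
  apply my_sq_eq sq huniq
  calc sq a * sq b * (sq a * sq b) = sq a * (sq b * sq a) * sq b := by group
    _ = sq a * (sq a * sq b) * sq b := by rw [hab.symm.eq]
    _ = (sq a * sq a) * (sq b * sq b) := by group
    _ = a * b := by rw [hsq, hsq]

lemma my_sq_cube {a : G} (h : a * a * a = 1) : sq a = a * a :=
  my_sq_eq sq huniq (by rw [show a * a * (a * a) = a * a * a * a by group, h, one_mul])

end Basic

section Op
include huniq hop

lemma my_op_one (x : G) : op x 1 = x := by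
  rw [hop, show (1:G)⁻¹ * x⁻¹ * 1 * x = 1 by group, my_sq_one sq huniq, mul_one, mul_one]

lemma my_op_inv_self (y : G) : op y y⁻¹ = 1 := by
  rw [hop, show (y⁻¹)⁻¹ * y⁻¹ * y⁻¹ * y = 1 by group, my_sq_one sq huniq, mul_one,
    mul_inv_cancel]

lemma my_op_comm {u v : G} (h : Commute u v) : op u v = u * v := by
  have h1 : v⁻¹ * u⁻¹ * v * u = 1 := by
    rw [show v⁻¹ * u⁻¹ * v * u = (u * v)⁻¹ * (v * u) by group, h.eq]; group
  rw [hop, h1, my_sq_one sq huniq, mul_one]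

end Op

section Engel
include hsq huniq hop hassoc

lemma my_engel (x y : G) : Commute y (sq (br y x)) := by
  have h := hassoc x y y⁻¹
  rw [my_op_inv_self sq op huniq hop, my_op_one sq op huniq hop, hop x y, hop] at h
  set s := sq (y⁻¹ * x⁻¹ * y * x) with hs
  have hc : s * s = y⁻¹ * x⁻¹ * y * x := hsq _
  rw [show (y⁻¹)⁻¹ * (x * y * s)⁻¹ * y⁻¹ * (x * y * s)
      = y * s⁻¹ * (y⁻¹ * (y⁻¹ * x⁻¹ * y * x)⁻¹) * s by group, ← hc] at h
  have h2 : sq (y * s⁻¹ * (y⁻¹ * (s * s)⁻¹) * s) = y * s⁻¹ * y⁻¹ := by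
    calc sq (y * s⁻¹ * (y⁻¹ * (s * s)⁻¹) * s)
        = (x * y * s * y⁻¹)⁻¹ * (x * y * s * y⁻¹ * sq (y * s⁻¹ * (y⁻¹ * (s * s)⁻¹) * s)) := by
          group
      _ = (x * y * s * y⁻¹)⁻¹ * x := by rw [h]
      _ = y * s⁻¹ * y⁻¹ := by group
  have h3 : y * s⁻¹ * (y⁻¹ * (s * s)⁻¹) * s = (y * s⁻¹ * y⁻¹) * (y * s⁻¹ * y⁻¹) := by
    rw [← h2]; exact (hsq _).symm
  have h4 : (y * s⁻¹) * (y⁻¹ * s⁻¹) = (y * s⁻¹) * (s⁻¹ * y⁻¹) := by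
    calc (y * s⁻¹) * (y⁻¹ * s⁻¹) = y * s⁻¹ * (y⁻¹ * (s * s)⁻¹) * s := by group
      _ = (y * s⁻¹ * y⁻¹) * (y * s⁻¹ * y⁻¹) := h3
      _ = (y * s⁻¹) * (s⁻¹ * y⁻¹) := by group
  have h5 : y⁻¹ * s⁻¹ = s⁻¹ * y⁻¹ := mul_left_cancel h4
  have h6 : Commute y⁻¹ s⁻¹ := h5
  have h7 := h6.inv_inv
  simpa [br_def] using h7

lemma my_heng (x y : G) : Commute y (br y x) := by
  have h := my_engel sq op hsq huniq hop hassoc x y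
  have e : br y x = sq (br y x) * sq (br y x) := (hsq _).symm
  rw [e]
  exact h.mul_right h

end Engel

section NNpack
variable (heng : ∀ x y : G, Commute y (br y x))

include heng in
lemma my_engel_conj (x y : G) : Commute y (x⁻¹ * y * x) := by
  have h := heng x y
  rw [show x⁻¹ * y * x = y * (y⁻¹ * x⁻¹ * y * x) by group]
  exact (Commute.refl y).mul_right (by rw [br_def] at h; exact h)

include heng in
lemma my_F2 (w a b : G) : Commute (a⁻¹ * w * a) (b⁻¹ * w * b) := by
  have h := my_engel_conj heng (b * a⁻¹) w
  have h2 := my_conj_comm a h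
  rwa [show a⁻¹ * ((b * a⁻¹)⁻¹ * w * (b * a⁻¹)) * a = b⁻¹ * w * b by group] at h2

def NN (w : G) : Subgroup G := Subgroup.closure {x | ∃ a, x = a⁻¹ * w * a}

lemma my_mem_conj (w a : G) : a⁻¹ * w * a ∈ NN w := Subgroup.subset_closure ⟨a, rfl⟩

lemma my_mem_self (w : G) : w ∈ NN w := by
  have := my_mem_conj w 1; simpa using this

include heng in
lemma my_NN_comm {w p q : G} (hp : p ∈ NN w) (hq : q ∈ NN w) : Commute p q := by
  induction hp using Subgroup.closure_induction with
  | mem p hp =>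
    obtain ⟨a, rfl⟩ := hp
    induction hq using Subgroup.closure_induction with
    | mem q hq => obtain ⟨b, rfl⟩ := hq; exact my_F2 heng w a b
    | one => exact Commute.one_right _
    | mul q r _ _ ih1 ih2 => exact ih1.mul_right ih2
    | inv q _ ih => exact ih.inv_right
  | one => exact Commute.one_left _
  | mul p r _ _ ih1 ih2 => exact ih1.mul_left ih2
  | inv p _ ih => exact ih.inv_left

lemma my_mem_br_r (u w : G) : br u w ∈ NN w := by
  rw [show br u w = (u⁻¹ * w * u)⁻¹ * w from by rw [br_def]; group]
  exact mul_mem (inv_mem (my_mem_conj w u)) (my_mem_self w)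

lemma my_mem_br_l (w u : G) : br w u ∈ NN w := by
  rw [show br w u = w⁻¹ * (u⁻¹ * w * u) from by rw [br_def]; group]
  exact mul_mem (inv_mem (my_mem_self w)) (my_mem_conj w u)

include huniq hodd in
lemma my_mem_sq {c w : G} (h : c ∈ NN w) : sq c ∈ NN w := by
  rw [my_sq_pow sq huniq hodd c]
  exact pow_mem h _

include huniq hodd heng in
lemma my_br_sq (u w : G) : br u (sq w) = sq (br u w) := by
  have hcw : Commute (br u w) w := my_NN_comm heng (my_mem_br_r u w) (my_mem_self w)
  have hpow : ∀ m : ℕ, br u (w ^ m) = (br u w) ^ m := by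
    intro m
    induction m with
    | zero => rw [pow_zero, pow_zero, br_def]; group
    | succ m ih =>
      have e1 : br u (w ^ m * w) = br u w * (w⁻¹ * br u (w ^ m) * w) := by
        rw [br_def, br_def, br_def]; group
      have e2 : w⁻¹ * br u (w ^ m) * w = br u (w ^ m) := by
        rw [ih]; exact my_conj_eq (hcw.pow_left m)
      rw [pow_succ, e1, e2, ih, pow_succ']
  obtain ⟨k, hk⟩ := hodd w
  have hs : sq w = w ^ (k + 1) := by
    refine (huniq _ _ ?_).symm
    rw [← pow_add, show k + 1 + (k + 1) = orderOf w + 1 by omega, pow_succ,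
      pow_orderOf_eq_one, one_mul]
  have h1 : br u (sq w) = (br u w) ^ (k + 1) := by rw [hs, hpow]
  have h2 : (br u w) ^ (k + 1) * (br u w) ^ (k + 1) = br u w := by
    rw [← pow_add, show k + 1 + (k + 1) = orderOf w + 1 by omega, ← hpow, pow_succ,
      pow_orderOf_eq_one, one_mul]
  rw [h1]
  exact huniq _ _ h2

end NNpack

section OpMore
include hsq huniq hop

lemma my_opconj (g x y : G) : g⁻¹ * op x y * g = op (g⁻¹ * x * g) (g⁻¹ * y * g) := by
  rw [hop, hop,
    show (g⁻¹ * y * g)⁻¹ * (g⁻¹ * x * g)⁻¹ * (g⁻¹ * y * g) * (g⁻¹ * x * g)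
      = g⁻¹ * (y⁻¹ * x⁻¹ * y * x) * g by group,
    show sq (g⁻¹ * (y⁻¹ * x⁻¹ * y * x) * g) = g⁻¹ * sq (y⁻¹ * x⁻¹ * y * x) * g from
      (huniq _ _ (by rw [show (g⁻¹ * sq (y⁻¹*x⁻¹*y*x) * g) * (g⁻¹ * sq (y⁻¹*x⁻¹*y*x) * g)
        = g⁻¹ * (sq (y⁻¹*x⁻¹*y*x) * sq (y⁻¹*x⁻¹*y*x)) * g by group, hsq])).symm]
  group

lemma my_opinv (x y : G) : (op x y)⁻¹ = op x⁻¹ y⁻¹ := by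
  rw [hop, hop,
    show (y⁻¹)⁻¹ * (x⁻¹)⁻¹ * y⁻¹ * x⁻¹
      = ((x*y)⁻¹)⁻¹ * (y⁻¹ * x⁻¹ * y * x) * (x*y)⁻¹ by group,
    show sq (((x*y)⁻¹)⁻¹ * (y⁻¹ * x⁻¹ * y * x) * (x*y)⁻¹)
      = ((x*y)⁻¹)⁻¹ * sq (y⁻¹ * x⁻¹ * y * x) * (x*y)⁻¹ from
      (huniq _ _ (by rw [show (((x*y)⁻¹)⁻¹ * sq (y⁻¹*x⁻¹*y*x) * (x*y)⁻¹) * (((x*y)⁻¹)⁻¹ * sq (y⁻¹*x⁻¹*y*x) * (x*y)⁻¹)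
        = ((x*y)⁻¹)⁻¹ * (sq (y⁻¹*x⁻¹*y*x) * sq (y⁻¹*x⁻¹*y*x)) * (x*y)⁻¹ by group, hsq])).symm]
  have keygen : ∀ c s : G, s * s = c → c⁻¹ * s = s⁻¹ := by
    intro c s h; rw [← h]; group
  have key : (y⁻¹ * x⁻¹ * y * x)⁻¹ * sq (y⁻¹ * x⁻¹ * y * x) = (sq (y⁻¹ * x⁻¹ * y * x))⁻¹ :=
    keygen _ _ (hsq _)
  calc (x * y * sq (y⁻¹*x⁻¹*y*x))⁻¹
      = (sq (y⁻¹*x⁻¹*y*x))⁻¹ * y⁻¹ * x⁻¹ := by group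
    _ = ((y⁻¹ * x⁻¹ * y * x)⁻¹ * sq (y⁻¹ * x⁻¹ * y * x)) * y⁻¹ * x⁻¹ := by rw [key]
    _ = x⁻¹ * y⁻¹ * (((x*y)⁻¹)⁻¹ * sq (y⁻¹*x⁻¹*y*x) * (x*y)⁻¹) := by group

include hcomm hassoc in
lemma my_shuffle (p q r u : G) : op (op p q) (op r u) = op (op p r) (op q u) := by
  rw [hassoc p q (op r u), ← hassoc q r u, hcomm q r, hassoc r q u, ← hassoc p r (op q u)]

include hcomm hassoc in
lemma my_brop (heng : ∀ x y : G, Commute y (br y x)) (w g : G) :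
    br w g = op w⁻¹ (g⁻¹ * w * g) := by
  have hc : Commute w⁻¹ (g⁻¹ * w * g) := (my_engel_conj heng g w).inv_left
  rw [my_op_comm sq op huniq hop hc, br_def]; group

include hcomm hassoc in
lemma my_add (heng : ∀ x y : G, Commute y (br y x)) (g x y : G) :
    br (op x y) g = op (br x g) (br y g) := by
  rw [my_brop sq op hsq huniq hop hcomm hassoc heng,
    my_opconj sq op hsq huniq hop, my_opinv sq op hsq huniq hop,
    my_shuffle sq op hsq huniq hop hcomm hassoc,
    ← my_brop sq op hsq huniq hop hcomm hassoc heng,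
    ← my_brop sq op hsq huniq hop hcomm hassoc heng]

end OpMore

section StarStar
variable (heng : ∀ x y : G, Commute y (br y x))
include hsq huniq hodd hop hcomm hassoc heng

lemma my_starstar (x y g : G) :
    br (br y x) g = (br (br x g) y)⁻¹ * (br (br x g) y)⁻¹ := by
  have c1 : Commute (br x g) (sq (br y x)) :=
    my_NN_comm heng (my_mem_br_l x g) (my_mem_sq sq huniq hodd (my_mem_br_r y x))
  have c2 : Commute (br (br x g) y) (sq (br y x)) :=
    my_NN_comm heng (my_mem_br_r (br x g) y) (my_mem_sq sq huniq hodd (my_mem_br_l y x))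
  have c3 : Commute (br y g) (sq (br y x)) :=
    my_NN_comm heng (my_mem_br_l y g) (my_mem_sq sq huniq hodd (my_mem_br_l y x))
  have c4 : Commute (br (br x g) y) (br y g) :=
    my_NN_comm heng (my_mem_br_r (br x g) y) (my_mem_br_l y g)
  have hA := my_add sq op hsq huniq hop hcomm hassoc heng g x y
  have hR : op (br x g) (br y g) = br x g * br y g :=
    my_op_comm sq op huniq hop (my_NN_comm heng (my_mem_br_r x g) (my_mem_br_r y g))
  have hxy : op x y = x * y * sq (br y x) := by rw [hop x y, br_def]
  have hW : Commute ((br x g * br (br x g) y) * br y g) (sq (br y x)) :=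
    (c1.mul_left c2).mul_left c3
  have E : br (op x y) g = ((br x g * br (br x g) y) * br y g) * br (sq (br y x)) g := by
    rw [hxy, br_mul_left (x*y) (sq (br y x)) g, br_mul_left x y g, br_conj (br x g) y]
    rw [show (sq (br y x))⁻¹ * (br x g * br (br x g) y * br y g) * sq (br y x)
        = (sq (br y x))⁻¹ * ((br x g * br (br x g) y) * br y g) * sq (br y x) by group,
      my_conj_eq hW]
  have main : ((br x g * br (br x g) y) * br y g) * br (sq (br y x)) g = br x g * br y g := by
    rw [← E, hA, hR]
  have m2 : br x g * (br (br x g) y * (br y g * br (sq (br y x)) g)) = br x g * (br y g) := by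
    calc br x g * (br (br x g) y * (br y g * br (sq (br y x)) g))
        = ((br x g * br (br x g) y) * br y g) * br (sq (br y x)) g := by group
      _ = br x g * br y g := main
      _ = br x g * (br y g) := by group
  have m3 := mul_left_cancel m2
  have m4 : br y g * (br (br x g) y * br (sq (br y x)) g) = br y g * 1 := by
    calc br y g * (br (br x g) y * br (sq (br y x)) g)
        = (br y g * br (br x g) y) * br (sq (br y x)) g := by group
      _ = (br (br x g) y * br y g) * br (sq (br y x)) g := by rw [← c4.eq]
      _ = br (br x g) y * (br y g * br (sq (br y x)) g) := by group
      _ = br y g := m3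
      _ = br y g * 1 := by group
  have m5 := mul_left_cancel m4
  have m6 : br (sq (br y x)) g = (br (br x g) y)⁻¹ := eq_inv_of_mul_eq_one_right m5
  have m7 : br g (sq (br y x)) = br (br x g) y := by
    rw [show br g (sq (br y x)) = (br (sq (br y x)) g)⁻¹ from h_br_inv _ _, m6, inv_inv]
  have m8 : sq (br g (br y x)) = br (br x g) y := by
    rw [← my_br_sq sq huniq hodd heng g (br y x)]; exact m7
  have m9 : br g (br y x) = br (br x g) y * br (br x g) y := by
    have h0 := hsq (br g (br y x))
    rw [← h0, m8]
  calc br (br y x) g = (br g (br y x))⁻¹ := h_br_inv _ _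
    _ = (br (br x g) y * br (br x g) y)⁻¹ := by rw [m9]
    _ = (br (br x g) y)⁻¹ * (br (br x g) y)⁻¹ := by group

lemma my_swap (a b c : G) : br (br b a) c = (br (br a b) c)⁻¹ := by
  have h : Commute (br a b) (br (br a b) c) :=
    my_NN_comm heng (my_mem_self _) (my_mem_br_l _ c)
  have h4 : br a b * (br (br a b) c)⁻¹ * (br a b)⁻¹ = (br (br a b) c)⁻¹ := by
    calc br a b * (br (br a b) c)⁻¹ * (br a b)⁻¹
        = ((br (br a b) c)⁻¹ * br a b) * (br a b)⁻¹ := by rw [h.inv_right.eq]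
      _ = (br (br a b) c)⁻¹ := by group
  calc br (br b a) c = br a b * (br (br a b) c)⁻¹ * (br a b)⁻¹ := by
        simp only [br_def]; group
    _ = (br (br a b) c)⁻¹ := h4

lemma my_S3 (a b c : G) :
    br (br a b) c * br (br a b) c * br (br a b) c = 1 := by
  have s1 := my_starstar sq op hsq huniq hodd hop hcomm hassoc heng b a c
  have s2 := my_swap sq op hsq huniq hodd hop hcomm hassoc heng c b a
  have s3 := my_starstar sq op hsq huniq hodd hop hcomm hassoc heng b c a
  have s4 := my_swap sq op hsq huniq hodd hop hcomm hassoc heng a b c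
  have e : br (br a b) c = br (br a b) c * (br (br a b) c * br (br a b) c * br (br a b) c) := by
    calc br (br a b) c = (br (br b c) a)⁻¹ * (br (br b c) a)⁻¹ := s1
      _ = ((br (br c b) a)⁻¹)⁻¹ * ((br (br c b) a)⁻¹)⁻¹ := by rw [s2]
      _ = br (br c b) a * br (br c b) a := by group
      _ = ((br (br b a) c)⁻¹ * (br (br b a) c)⁻¹) * ((br (br b a) c)⁻¹ * (br (br b a) c)⁻¹) := by
          rw [s3]
      _ = (((br (br a b) c)⁻¹)⁻¹ * ((br (br a b) c)⁻¹)⁻¹) *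
          (((br (br a b) c)⁻¹)⁻¹ * ((br (br a b) c)⁻¹)⁻¹) := by rw [s4]
      _ = br (br a b) c * (br (br a b) c * br (br a b) c * br (br a b) c) := by group
  have e2 : br (br a b) c * (br (br a b) c * br (br a b) c * br (br a b) c)
      = br (br a b) c * 1 := by rw [← e, mul_one]
  exact mul_left_cancel e2

lemma my_cyc (a b c : G) : br (br a b) c = br (br b c) a := by
  have s1 := my_starstar sq op hsq huniq hodd hop hcomm hassoc heng b a c
  have hY3 := my_S3 sq op hsq huniq hodd hop hcomm hassoc heng b c a
  have hYinv : br (br b c) a * br (br b c) a = (br (br b c) a)⁻¹ :=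
    eq_inv_of_mul_eq_one_left hY3
  calc br (br a b) c = (br (br b c) a)⁻¹ * (br (br b c) a)⁻¹ := s1
    _ = (br (br b c) a * br (br b c) a) * (br (br b c) a * br (br b c) a) := by rw [hYinv]
    _ = br (br b c) a * (br (br b c) a * br (br b c) a * br (br b c) a) := by group
    _ = br (br b c) a * 1 := by rw [hY3]
    _ = br (br b c) a := mul_one _

end StarStar

section Final
variable (heng : ∀ x y : G, Commute y (br y x))
include hsq huniq hodd hop hcomm hassoc heng

lemma my_final (x y z : G) : br (br y x) z = 1 := by
  have NC : ∀ {w p q : G}, p ∈ NN w → q ∈ NN w → Commute p q :=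
    fun hp hq => my_NN_comm heng hp hq
  have hP3 := my_S3 sq op hsq huniq hodd hop hcomm hassoc heng y x z
  have hPP : br (br y x) z * br (br y x) z = (br (br y x) z)⁻¹ :=
    eq_inv_of_mul_eq_one_left hP3
  have e8 : sq (br (br y x) z)⁻¹ = br (br y x) z := by
    rw [my_sq_inv sq hsq huniq _, my_sq_cube sq huniq hP3, hPP, inv_inv]
  have e6 : br z (br y x) = (br (br y x) z)⁻¹ := h_br_inv _ _
  have hzs : br z (sq (br y x)) = br (br y x) z := by
    rw [my_br_sq sq huniq hodd heng z (br y x), e6, e8]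
  have e4 : br (br z x) y = (br (br y x) z)⁻¹ := by
    rw [my_cyc sq op hsq huniq hodd hop hcomm hassoc heng z x y,
      my_swap sq op hsq huniq hodd hop hcomm hassoc heng y x z]
  have hBx : br (br z y) x = br (br y x) z :=
    my_cyc sq op hsq huniq hodd hop hcomm hassoc heng z y x
  have hxt : br x (sq (br z y)) = br (br y x) z := by
    rw [my_br_sq sq huniq hodd heng x (br z y),
      show br x (br z y) = (br (br z y) x)⁻¹ from h_br_inv _ _, hBx, e8]
  have htx : br (sq (br z y)) x = (br (br y x) z)⁻¹ := by
    rw [h_br_inv (sq (br z y)) x, hxt]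
  -- commuting facts
  have cBA : Commute (br z y) (br z x) := NC (my_mem_br_l z y) (my_mem_br_l z x)
  have ccA : Commute (br y x) (br z x) := NC (my_mem_br_r y x) (my_mem_br_r z x)
  have cBs : Commute (br z y) (sq (br y x)) :=
    NC (my_mem_br_r z y) (my_mem_sq sq huniq hodd (my_mem_br_l y x))
  have cAs : Commute (br z x) (sq (br y x)) :=
    NC (my_mem_br_r z x) (my_mem_sq sq huniq hodd (my_mem_br_r y x))
  have cPs : Commute (br (br y x) z) (sq (br y x)) :=
    NC (my_mem_br_l (br y x) z) (my_mem_sq sq huniq hodd (my_mem_self (br y x)))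
  have cPB : Commute (br (br y x) z) (br z y) :=
    NC (my_mem_br_r (br y x) z) (my_mem_br_l z y)
  have cPA : Commute (br (br y x) z) (br z x) :=
    NC (my_mem_br_r (br y x) z) (my_mem_br_l z x)
  have cct : Commute (br y x) (sq (br z y)) :=
    NC (my_mem_br_l y x) (my_mem_sq sq huniq hodd (my_mem_br_r z y))
  have cPt : Commute (br (br y x) z) (sq (br z y)) :=
    NC (my_mem_br_r (br y x) z) (my_mem_sq sq huniq hodd (my_mem_br_l z y))
  have cAt : Commute (br z x) (sq (br z y)) :=
    NC (my_mem_br_l z x) (my_mem_sq sq huniq hodd (my_mem_br_l z y))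
  have cst : Commute (sq (br y x)) (sq (br z y)) :=
    NC (my_mem_sq sq huniq hodd (my_mem_br_l y x)) (my_mem_sq sq huniq hodd (my_mem_br_r z y))
  -- Claim A
  have hW : Commute (br z y * (br z x * (br (br y x) z)⁻¹)) (sq (br y x)) :=
    cBs.mul_left (cAs.mul_left cPs.inv_left)
  have hBA : br z (x * y * sq (br y x)) = br z y * br z x := by
    calc br z (x * y * sq (br y x))
        = br z (sq (br y x)) * ((sq (br y x))⁻¹ * br z (x * y) * sq (br y x)) :=
          br_mul_right z (x * y) (sq (br y x))
      _ = br z (sq (br y x)) *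
          ((sq (br y x))⁻¹ * (br z y * (br z x * br (br z x) y)) * sq (br y x)) := by
          rw [br_mul_right z x y, br_conj (br z x) y]
      _ = br z (sq (br y x)) *
          ((sq (br y x))⁻¹ * (br z y * (br z x * (br (br y x) z)⁻¹)) * sq (br y x)) := by
          rw [e4]
      _ = br z (sq (br y x)) * (br z y * (br z x * (br (br y x) z)⁻¹)) := by
          rw [my_conj_eq hW]
      _ = br (br y x) z * (br z y * (br z x * (br (br y x) z)⁻¹)) := by rw [hzs]
      _ = br z y * br z x := by
          calc br (br y x) z * (br z y * (br z x * (br (br y x) z)⁻¹))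
              = (br (br y x) z * br z y) * br z x * (br (br y x) z)⁻¹ := by group
            _ = (br z y * br (br y x) z) * br z x * (br (br y x) z)⁻¹ := by rw [cPB.eq]
            _ = br z y * (br (br y x) z * br z x) * (br (br y x) z)⁻¹ := by group
            _ = br z y * (br z x * br (br y x) z) * (br (br y x) z)⁻¹ := by rw [cPA.eq]
            _ = br z y * br z x := by group
  -- Claim B
  have hW2 : Commute (br y x * br (br y x) z * br z x) (sq (br z y)) :=
    (cct.mul_left cPt).mul_left cAt
  have hCA : br (y * z * sq (br z y)) x = br y x * br z x := by
    calc br (y * z * sq (br z y)) x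
        = (sq (br z y))⁻¹ * br (y * z) x * sq (br z y) * br (sq (br z y)) x :=
          br_mul_left (y * z) (sq (br z y)) x
      _ = (sq (br z y))⁻¹ * (br y x * br (br y x) z * br z x) * sq (br z y) *
          br (sq (br z y)) x := by
          rw [br_mul_left y z x, br_conj (br y x) z]
      _ = (br y x * br (br y x) z * br z x) * br (sq (br z y)) x := by
          rw [my_conj_eq hW2]
      _ = (br y x * br (br y x) z * br z x) * (br (br y x) z)⁻¹ := by rw [htx]
      _ = br y x * br z x := by
          calc (br y x * br (br y x) z * br z x) * (br (br y x) z)⁻¹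
              = br y x * (br (br y x) z * br z x) * (br (br y x) z)⁻¹ := by group
            _ = br y x * (br z x * br (br y x) z) * (br (br y x) z)⁻¹ := by rw [cPA.eq]
            _ = br y x * br z x := by group
  -- assemble
  have h := hassoc x y z
  rw [hop x y, hop y z, ← br_def y x, ← br_def z y] at h
  rw [hop (x * y * sq (br y x)) z, hop x (y * z * sq (br z y))] at h
  rw [← br_def z (x * y * sq (br y x)), ← br_def (y * z * sq (br z y)) x] at h
  rw [hBA, hCA] at h
  rw [my_sq_mul sq hsq huniq hodd cBA, my_sq_mul sq hsq huniq hodd ccA] at h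
  have h1 : (x * y) * (sq (br y x) * z * sq (br z y)) * sq (br z x)
      = (x * y) * (z * sq (br z y) * sq (br y x)) * sq (br z x) := by
    calc (x * y) * (sq (br y x) * z * sq (br z y)) * sq (br z x)
        = x * y * sq (br y x) * z * (sq (br z y) * sq (br z x)) := by group
      _ = x * (y * z * sq (br z y)) * (sq (br y x) * sq (br z x)) := h
      _ = (x * y) * (z * sq (br z y) * sq (br y x)) * sq (br z x) := by group
  have h2 : sq (br y x) * z * sq (br z y) = z * sq (br z y) * sq (br y x) :=
    mul_left_cancel (mul_right_cancel h1)
  have hbrsz : br (sq (br y x)) z = (br (br y x) z)⁻¹ := by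
    rw [h_br_inv (sq (br y x)) z, hzs]
  have hsz2 : sq (br y x) * z = z * sq (br y x) * (br (br y x) z)⁻¹ := by
    calc sq (br y x) * z
        = z * sq (br y x) * ((sq (br y x))⁻¹ * z⁻¹ * sq (br y x) * z) := by group
      _ = z * sq (br y x) * br (sq (br y x)) z := by rw [← br_def (sq (br y x)) z]
      _ = z * sq (br y x) * (br (br y x) z)⁻¹ := by rw [hbrsz]
  have h3 : (z * sq (br y x)) * ((br (br y x) z)⁻¹ * sq (br z y))
      = (z * sq (br y x)) * sq (br z y) := by
    calc (z * sq (br y x)) * ((br (br y x) z)⁻¹ * sq (br z y))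
        = (z * sq (br y x) * (br (br y x) z)⁻¹) * sq (br z y) := by group
      _ = (sq (br y x) * z) * sq (br z y) := by rw [← hsz2]
      _ = sq (br y x) * z * sq (br z y) := by group
      _ = z * sq (br z y) * sq (br y x) := h2
      _ = z * (sq (br z y) * sq (br y x)) := by group
      _ = z * (sq (br y x) * sq (br z y)) := by rw [← cst.eq]
      _ = (z * sq (br y x)) * sq (br z y) := by group
  have h4 := mul_left_cancel h3
  have h5 : (br (br y x) z)⁻¹ = 1 := by
    have h6 : (br (br y x) z)⁻¹ * sq (br z y) = 1 * sq (br z y) := by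
      rw [one_mul]; exact h4
    exact mul_right_cancel h6
  rw [← inv_inv (br (br y x) z), h5, inv_one]

end Final

end CircAux

/-- Let `G` be a uniquely 2-divisible group in which every element has odd order,
with `x ∘ y = x y [y,x]^{1/2}`.  If `(G, ∘)` is an abelian group, then `G` is
nilpotent of class at most 2, i.e. `[x,y,z] = 1` for all `x, y, z`. -/
theorem circ_abelian_implies_class_two {G : Type*} [Group G] (sq : G → G)
    (hsq : ∀ a, sq a * sq a = a) (huniq : ∀ a b, b * b = a → b = sq a)
    (hodd : ∀ g : G, Odd (orderOf g))
    (op : G → G → G) (hop : ∀ x y, op x y = x * y * sq (y⁻¹ * x⁻¹ * y * x))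
    (hcomm : ∀ x y : G, op x y = op y x)
    (hassoc : ∀ x y z : G, op (op x y) z = op x (op y z)) :
    ∀ x y z : G,
      (x⁻¹ * y⁻¹ * x * y)⁻¹ * z⁻¹ * (x⁻¹ * y⁻¹ * x * y) * z = 1 := by
  intro x y z
  have heng : ∀ x y : G, Commute y (CircAux.br y x) :=
    CircAux.my_heng sq op hsq huniq hop hassoc
  have h := CircAux.my_final sq op hsq huniq hodd hop hcomm hassoc heng y x z
  exact h
end

section
/- Let G be a group of nilpotency class at most 2 that is uniquely 2-divisible, and define x ∘ y = xy[y,x]^{1/2}. Then (G, ∘) is an abelian group. -/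
/-- Baer trick: if `G` is uniquely 2-divisible of nilpotency class at most 2
(every commutator is central) and `x ∘ y = x y [y,x]^{1/2}`, then `(G, ∘)` is an
abelian group. -/
theorem baer_trick {G : Type*} [Group G] (sq : G → G)
    (hsq : ∀ a, sq a * sq a = a) (huniq : ∀ a b, b * b = a → b = sq a)
    (hclass2 : ∀ x y z : G, (x⁻¹ * y⁻¹ * x * y) * z = z * (x⁻¹ * y⁻¹ * x * y))
    (op : G → G → G) (hop : ∀ x y, op x y = x * y * sq (y⁻¹ * x⁻¹ * y * x)) :
    (∀ x y : G, op x y = op y x) ∧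
    (∀ x y z : G, op (op x y) z = op x (op y z)) ∧
    (∀ x : G, op 1 x = x) ∧
    (∀ x : G, op x x⁻¹ = 1) := by
  -- commutators are central
  have hc : ∀ x y z : G, (y⁻¹ * x⁻¹ * y * x) * z = z * (y⁻¹ * x⁻¹ * y * x) :=
    fun x y z => hclass2 y x z
  -- square roots of central elements are central
  have hsqc : ∀ a : G, (∀ z, a * z = z * a) → ∀ z : G, sq a * z = z * sq a := by
    intro a ha z
    have h1 : (z * sq a * z⁻¹) * (z * sq a * z⁻¹) = a := by
      calc (z * sq a * z⁻¹) * (z * sq a * z⁻¹) = z * (sq a * sq a) * z⁻¹ := by group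
        _ = z * a * z⁻¹ := by rw [hsq]
        _ = a := by rw [← ha]; group
    have h2 := huniq a _ h1
    have h3 : z * sq a = sq a * z := by
      conv_rhs => rw [← h2]
      group
    exact h3.symm
  have sq_one : sq (1 : G) = 1 := (huniq 1 1 (by group)).symm
  have sq_inv : ∀ a : G, sq a⁻¹ = (sq a)⁻¹ := by
    intro a
    refine (huniq a⁻¹ (sq a)⁻¹ ?_).symm
    rw [← mul_inv_rev, hsq]
  have sq_mul : ∀ a b : G, (∀ z, a * z = z * a) → (∀ z, b * z = z * b) →
      sq (a * b) = sq a * sq b := by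
    intro a b ha hb
    refine (huniq _ _ ?_).symm
    have hcom : sq b * sq a = sq a * sq b := hsqc b hb (sq a)
    calc (sq a * sq b) * (sq a * sq b) = sq a * (sq b * sq a) * sq b := by group
      _ = sq a * (sq a * sq b) * sq b := by rw [hcom]
      _ = (sq a * sq a) * (sq b * sq b) := by group
      _ = a * b := by rw [hsq, hsq]
  refine ⟨?_, ?_, ?_, ?_⟩
  · -- commutativity
    intro x y
    rw [hop, hop]
    have h1 : x⁻¹ * y⁻¹ * x * y = (y⁻¹ * x⁻¹ * y * x)⁻¹ := by group
    rw [h1, sq_inv]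
    set s := sq (y⁻¹ * x⁻¹ * y * x) with hs_def
    have hs2 : s * s = y⁻¹ * x⁻¹ * y * x := hsq _
    calc x * y * s = x * y * (s * s) * s⁻¹ := by group
      _ = x * y * (y⁻¹ * x⁻¹ * y * x) * s⁻¹ := by rw [hs2]
      _ = y * x * s⁻¹ := by group
  · -- associativity
    intro x y z
    rw [hop, hop, hop, hop]
    set s := sq (y⁻¹ * x⁻¹ * y * x) with hs_def
    set t := sq (z⁻¹ * y⁻¹ * z * y) with ht_def
    have hs : ∀ w : G, s * w = w * s := hsqc _ (hc x y)
    have ht : ∀ w : G, t * w = w * t := hsqc _ (hc y z)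
    -- simplify left commutator argument
    have key1 : z⁻¹ * (x * y * s)⁻¹ * z * (x * y * s)
        = (z⁻¹ * x⁻¹ * z * x) * (z⁻¹ * y⁻¹ * z * y) := by
      have e1 : z⁻¹ * (x * y * s)⁻¹ * z * (x * y * s)
          = z⁻¹ * s⁻¹ * (((x * y)⁻¹ * z * (x * y)) * s) := by group
      rw [e1, ← hs ((x * y)⁻¹ * z * (x * y))]
      calc z⁻¹ * s⁻¹ * (s * ((x * y)⁻¹ * z * (x * y)))
          = z⁻¹ * y⁻¹ * z * ((z⁻¹ * x⁻¹ * z * x) * y) := by group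
        _ = z⁻¹ * y⁻¹ * z * (y * (z⁻¹ * x⁻¹ * z * x)) := by rw [hc x z y]
        _ = (z⁻¹ * y⁻¹ * z * y) * (z⁻¹ * x⁻¹ * z * x) := by group
        _ = (z⁻¹ * x⁻¹ * z * x) * (z⁻¹ * y⁻¹ * z * y) :=
            (hc x z (z⁻¹ * y⁻¹ * z * y)).symm
    have key2 : (y * z * t)⁻¹ * x⁻¹ * (y * z * t) * x
        = (y⁻¹ * x⁻¹ * y * x) * (z⁻¹ * x⁻¹ * z * x) := by
      have e1 : (y * z * t)⁻¹ * x⁻¹ * (y * z * t) * x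
          = t⁻¹ * (((y * z)⁻¹ * x⁻¹ * (y * z)) * t) * x := by group
      rw [e1, ← ht ((y * z)⁻¹ * x⁻¹ * (y * z))]
      calc t⁻¹ * (t * ((y * z)⁻¹ * x⁻¹ * (y * z))) * x
          = z⁻¹ * ((y⁻¹ * x⁻¹ * y * x) * (x⁻¹ * z * x)) := by group
        _ = z⁻¹ * ((x⁻¹ * z * x) * (y⁻¹ * x⁻¹ * y * x)) := by
            rw [hc x y (x⁻¹ * z * x)]
        _ = (z⁻¹ * x⁻¹ * z * x) * (y⁻¹ * x⁻¹ * y * x) := by group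
        _ = (y⁻¹ * x⁻¹ * y * x) * (z⁻¹ * x⁻¹ * z * x) :=
            (hc x y (z⁻¹ * x⁻¹ * z * x)).symm
    rw [key1, key2]
    rw [sq_mul _ _ (hc x z) (hc y z), sq_mul _ _ (hc x y) (hc x z)]
    set u := sq (z⁻¹ * x⁻¹ * z * x) with hu_def
    have hu : ∀ w : G, u * w = w * u := hsqc _ (hc x z)
    -- goal : x * y * s * z * (u * t) = x * (y * z * t) * (s * u)
    calc x * y * s * z * (u * t)
        = x * y * (s * z) * (u * t) := by group
      _ = x * y * (z * s) * (u * t) := by rw [hs z]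
      _ = x * y * z * (s * (u * t)) := by group
      _ = x * y * z * ((u * t) * s) := by rw [hs (u * t)]
      _ = x * y * z * (u * (t * s)) := by group
      _ = x * y * z * (u * (s * t)) := by rw [ht s]
      _ = x * y * z * ((u * s) * t) := by group
      _ = x * y * z * ((s * u) * t) := by rw [hu s]
      _ = x * y * z * (t * (s * u)) := by rw [← ht (s * u)]
      _ = x * (y * z * t) * (s * u) := by group
  · intro x
    rw [hop]
    have h1 : x⁻¹ * (1 : G)⁻¹ * x * 1 = 1 := by group
    rw [h1, sq_one]
    group
  · intro x
    rw [hop]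
    have h1 : x⁻¹⁻¹ * x⁻¹ * x⁻¹ * x = 1 := by group
    rw [h1, sq_one]
    group
end

section
/- Let H be an abelian group of odd order and let α, β be commuting automorphisms of H, each of odd order in Aut(H). Then the map φ : H → H defined by φ(h) = α(h)·β(h) is an automorphism of H. -/
/-- Let `H` be an abelian group of odd order and `α, β` commuting automorphisms
of `H` of odd order in `Aut(H)`.  Then `h ↦ α(h)·β(h)` is an automorphism. -/
theorem sum_commuting_odd_auts {H : Type*} [CommGroup H] [Fintype H]
    (hH : Odd (Fintype.card H)) (α β : MulAut H)
    (hcomm : α * β = β * α) (hα : Odd (orderOf α)) (hβ : Odd (orderOf β)) :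
    ∃ φ : MulAut H, ∀ h : H, φ h = α h * β h := by
  set δ : MulAut H := β * α⁻¹ with hδ
  have hcomm' : Commute β α⁻¹ := by
    have hc : Commute α β := hcomm
    exact hc.symm.inv_right
  have hn : Odd (orderOf δ) := by
    have hdvd : orderOf δ ∣ Nat.lcm (orderOf β) (orderOf α⁻¹) :=
      hcomm'.orderOf_mul_dvd_lcm
    have hlcm : Nat.lcm (orderOf β) (orderOf α⁻¹) ∣ orderOf β * orderOf α⁻¹ :=
      Nat.lcm_dvd_mul _ _
    have hodd : Odd (orderOf β * orderOf α⁻¹) := by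
      rw [orderOf_inv]; exact hβ.mul hα
    rw [Nat.odd_iff] at hodd ⊢
    rcases Nat.even_or_odd (orderOf δ) with he | ho
    · exfalso
      have : 2 ∣ orderOf β * orderOf α⁻¹ :=
        dvd_trans (even_iff_two_dvd.mp he) (hdvd.trans hlcm)
      omega
    · exact Nat.odd_iff.mp ho
  -- the homomorphism
  set f : H →* H :=
    { toFun := fun h => α h * β h
      map_one' := by simp
      map_mul' := by intro a b; simp [map_mul, mul_mul_mul_comm] } with hf
  have hinj : Function.Injective f := by
    rw [injective_iff_map_eq_one]
    intro h hh
    simp only [hf, MonoidHom.coe_mk, OneHom.coe_mk] at hh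
    set x : H := α h with hx
    have hδx : δ x = x⁻¹ := by
      have : β h = (α h)⁻¹ := eq_inv_of_mul_eq_one_left
        (by rw [mul_comm]; exact hh)
      simp [hδ, MulAut.mul_apply, hx, this]
    -- δ² fixes x
    have h2 : (δ ^ 2) x = x := by
      have : δ (δ x) = x := by
        rw [hδx, map_inv, hδx, inv_inv]
      simpa [pow_succ, pow_zero, MulAut.mul_apply] using this
    have hpow : ∀ m : ℕ, ((δ ^ 2) ^ m) x = x := by
      intro m
      induction m with
      | zero => simp
      | succ k ih =>
        rw [pow_succ, MulAut.mul_apply, h2, ih]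
    -- since orderOf δ is odd, δ fixes x
    obtain ⟨k, hk⟩ := hn
    have hnpos : orderOf δ ≠ 0 := by omega
    have hδx' : δ x = x := by
      have e1 : δ ^ (orderOf δ + 1) = δ := by
        rw [pow_succ, pow_orderOf_eq_one, one_mul]
      have e2 : δ ^ (orderOf δ + 1) = (δ ^ 2) ^ (k + 1) := by
        rw [← pow_mul]
        congr 1
        omega
      calc δ x = (δ ^ (orderOf δ + 1)) x := by rw [e1]
        _ = ((δ ^ 2) ^ (k + 1)) x := by rw [e2]
        _ = x := hpow (k + 1)
    have hx1 : x = 1 := by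
      have hxx : x * x = 1 := by
        have := hδx.symm.trans hδx'
        rw [inv_eq_iff_mul_eq_one] at this
        exact this
      have hord : orderOf x ∣ 2 := orderOf_dvd_of_pow_eq_one (by rw [pow_two]; exact hxx)
      have hcard : orderOf x ∣ Fintype.card H := orderOf_dvd_card
      have : Odd (orderOf x) := by
        rw [Nat.odd_iff] at hH ⊢
        rcases Nat.even_or_odd (orderOf x) with he | ho
        · exfalso
          have : 2 ∣ Fintype.card H := dvd_trans (even_iff_two_dvd.mp he) hcard
          omega
        · exact Nat.odd_iff.mp ho
      rcases (Nat.dvd_prime Nat.prime_two).mp hord with h1 | h2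
      · exact orderOf_eq_one_iff.mp h1
      · rw [h2, Nat.odd_iff] at this; omega
    exact α.injective (by rw [← hx, hx1, map_one])
  exact ⟨MulEquiv.ofBijective f (Finite.injective_iff_bijective.mp hinj), fun h => rfl⟩
end

section
/- Let G be a uniquely 2-divisible metabelian group. Then for all x, y, z ∈ G: (1) [[x,y]^{1/2}, z] = [[x,y], z]^{1/2}, and (2) [x,y,z][z,x,y][y,z,x] = 1. -/
/-!
(1) Let `s = [x,y]^{1/2}` and `t = [s,z]`. As commutators, `t` and `s² = [x,y]` commute, so
conjugation by `t` fixes `s²` and hence, square roots being unique, fixes `s`. Then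
`[s²,z] = s⁻¹ts · t = t²`, so `t = [s²,z]^{1/2}`.

(2) With `a = [x,y]`, `b = [x,z]`, `c = [y,z]` the three factors are `a⁻¹aᶻ`, `b(bʸ)⁻¹` and
`c⁻¹cˣ`, where `aᶻ = [xᶻ,yᶻ]` etc. are again commutators. The identity `cˣ b aᶻ = a bʸ c`, valid in
every group, becomes the claim after rearranging in the abelian group `G'`.
-/

-- The paper's convention; Mathlib's `⁅a, b⁆` is `a * b * a⁻¹ * b⁻¹`.
local notation "⁅" a ", " b "⁆ᵣ" => a⁻¹ * b⁻¹ * a * b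

namespace Metabelian

variable {G : Type*} [Group G]

theorem commute_of_commute_mul_self (hinj : Function.Injective fun a : G => a * a) {g a : G}
    (h : Commute g (a * a)) : Commute g a := by
  have hconj : (g⁻¹ * a * g) * (g⁻¹ * a * g) = a * a := by
    calc (g⁻¹ * a * g) * (g⁻¹ * a * g) = g⁻¹ * (g * (a * a)) := by rw [h.eq]; group
      _ = a * a := by group
  have hfix : g⁻¹ * a * g = a := hinj hconj
  calc g * a = g * (g⁻¹ * a * g) := by rw [hfix]
    _ = a * g := by group

theorem rcomm_mul_self_left {s z : G} (h : Commute ⁅s, z⁆ᵣ s) :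
    ⁅s * s, z⁆ᵣ = ⁅s, z⁆ᵣ * ⁅s, z⁆ᵣ := by
  calc ⁅s * s, z⁆ᵣ = s⁻¹ * (⁅s, z⁆ᵣ * s) * ⁅s, z⁆ᵣ := by group
    _ = ⁅s, z⁆ᵣ * ⁅s, z⁆ᵣ := by rw [h.eq]; group

theorem rcomm_eq_sq_rcomm (sq : G → G) (huniq : ∀ a b, b * b = a → b = sq a) {s c z : G}
    (hs : s * s = c) (hcomm : Commute ⁅s, z⁆ᵣ c) : ⁅s, z⁆ᵣ = sq ⁅c, z⁆ᵣ := by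
  subst hs
  have hinj : Function.Injective fun a : G => a * a := fun a b hab =>
    (huniq _ a hab).trans (huniq _ b rfl).symm
  exact huniq _ _ (rcomm_mul_self_left (commute_of_commute_mul_self hinj hcomm)).symm

theorem rcomm_mem_commutator (a b : G) : ⁅a, b⁆ᵣ ∈ commutator G := by
  simpa [commutator_def, commutatorElement_def] using
    Subgroup.commutator_mem_commutator (Subgroup.mem_top a⁻¹) (Subgroup.mem_top b⁻¹)

theorem isMulCommutative_commutator (h : ∀ a b c d : G, Commute ⁅a, b⁆ᵣ ⁅c, d⁆ᵣ) :
    IsMulCommutative (commutator G) := by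
  rw [commutator_eq_closure]
  refine Subgroup.isMulCommutative_closure ?_
  rintro _ ⟨a, b, rfl⟩ _ ⟨c, d, rfl⟩
  simpa [commutatorElement_def] using (h a⁻¹ b⁻¹ c⁻¹ d⁻¹).eq

-- Both sides equal `(z * y * x)⁻¹ * (x * y * z)`.
theorem rcomm_conj_identity (x y z : G) :
    ⁅x⁻¹ * y * x, x⁻¹ * z * x⁆ᵣ * ⁅x, z⁆ᵣ * ⁅z⁻¹ * x * z, z⁻¹ * y * z⁆ᵣ =
      ⁅x, y⁆ᵣ * ⁅y⁻¹ * x * y, y⁻¹ * z * y⁆ᵣ * ⁅y, z⁆ᵣ := by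
  group

open scoped IsMulCommutative in
theorem rcomm_jacobi [IsMulCommutative (commutator G)] (x y z : G) :
    ⁅⁅x, y⁆ᵣ, z⁆ᵣ * ⁅⁅z, x⁆ᵣ, y⁆ᵣ * ⁅⁅y, z⁆ᵣ, x⁆ᵣ = 1 := by
  let elt (a b : G) : commutator G := ⟨⁅a, b⁆ᵣ, rcomm_mem_commutator a b⟩
  set A := elt x y
  set B := elt x z
  set C := elt y z
  set A' := elt (z⁻¹ * x * z) (z⁻¹ * y * z)
  set B' := elt (y⁻¹ * x * y) (y⁻¹ * z * y)
  set C' := elt (x⁻¹ * y * x) (x⁻¹ * z * x)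
  have key : C' * B * A' = A * B' * C := Subtype.ext (rcomm_conj_identity x y z)
  have hprod : A⁻¹ * A' * (B * B'⁻¹) * (C⁻¹ * C') = 1 := by
    calc A⁻¹ * A' * (B * B'⁻¹) * (C⁻¹ * C') = (C' * B * A') / (A * B' * C) := by
          simp only [div_eq_mul_inv, mul_inv]; ac_rfl
      _ = 1 := div_eq_one.mpr key
  calc ⁅⁅x, y⁆ᵣ, z⁆ᵣ * ⁅⁅z, x⁆ᵣ, y⁆ᵣ * ⁅⁅y, z⁆ᵣ, x⁆ᵣ
      = ((A⁻¹ * A' * (B * B'⁻¹) * (C⁻¹ * C') : commutator G) : G) := by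
        simp only [Subgroup.coe_mul, InvMemClass.coe_inv, A, B, C, A', B', C', elt]; group
    _ = 1 := by rw [hprod]; rfl

end Metabelian

/-- Let `G` be a uniquely 2-divisible metabelian group (all commutators commute
with each other).  With `[a,b] = a⁻¹b⁻¹ab`, for all `x, y, z`:
(1) `[[x,y]^{1/2}, z] = [[x,y], z]^{1/2}` and (2) `[x,y,z][z,x,y][y,z,x] = 1`. -/
theorem metabelian_commutator_identities {G : Type*} [Group G] (sq : G → G)
    (hsq : ∀ a, sq a * sq a = a) (huniq : ∀ a b, b * b = a → b = sq a)
    (hmeta : ∀ a b c d : G,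
      (a⁻¹ * b⁻¹ * a * b) * (c⁻¹ * d⁻¹ * c * d) =
        (c⁻¹ * d⁻¹ * c * d) * (a⁻¹ * b⁻¹ * a * b)) :
    ∀ x y z : G,
      ((sq (x⁻¹ * y⁻¹ * x * y))⁻¹ * z⁻¹ * sq (x⁻¹ * y⁻¹ * x * y) * z =
        sq ((x⁻¹ * y⁻¹ * x * y)⁻¹ * z⁻¹ * (x⁻¹ * y⁻¹ * x * y) * z)) ∧
      ((x⁻¹ * y⁻¹ * x * y)⁻¹ * z⁻¹ * (x⁻¹ * y⁻¹ * x * y) * z) *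
        ((z⁻¹ * x⁻¹ * z * x)⁻¹ * y⁻¹ * (z⁻¹ * x⁻¹ * z * x) * y) *
        ((y⁻¹ * z⁻¹ * y * z)⁻¹ * x⁻¹ * (y⁻¹ * z⁻¹ * y * z) * x) = 1 := by
  intro x y z
  have : IsMulCommutative (commutator G) := Metabelian.isMulCommutative_commutator hmeta
  exact ⟨Metabelian.rcomm_eq_sq_rcomm sq huniq (hsq _) (hmeta _ _ _ _),
    Metabelian.rcomm_jacobi x y z⟩
end

section
/- Let G be a uniquely 2-divisible metabelian group with operation x ∘ y = xy[y,x]^{1/2}. Then every element g of the second center ζ²(G) of G lies in the center of the loop (G, ∘); in particular y ∘ (x ∘ g) = (y ∘ x) ∘ g for all x, y ∈ G. -/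
private lemma comm_inv_left' {G : Type*} [Group G] {a b : G} (h : a*b = b*a) : a⁻¹*b = b*a⁻¹ := by
  calc a⁻¹*b = a⁻¹*(b*a)*a⁻¹ := by group
  _ = a⁻¹*(a*b)*a⁻¹ := by rw [← h]
  _ = b*a⁻¹ := by group

private lemma sq_conj' {G : Type*} [Group G] (sq : G → G)
    (hsq : ∀ a, sq a * sq a = a) (huniq : ∀ a b, b * b = a → b = sq a)
    (h a : G) : sq (h⁻¹*a*h) = h⁻¹ * sq a * h := by
  refine (huniq _ _ ?_).symm
  calc (h⁻¹ * sq a * h) * (h⁻¹ * sq a * h) = h⁻¹ * (sq a * sq a) * h := by group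
  _ = h⁻¹*a*h := by rw [hsq]

private lemma sq_comm' {G : Type*} [Group G] (sq : G → G)
    (hsq : ∀ a, sq a * sq a = a) (huniq : ∀ a b, b * b = a → b = sq a)
    {h a : G} (hc : h*a = a*h) : h * sq a = sq a * h := by
  have h1 : h⁻¹*a*h = a := by rw [mul_assoc, ← hc, inv_mul_cancel_left]
  have h2 := sq_conj' sq hsq huniq h a
  rw [h1] at h2
  calc h * sq a = h * (h⁻¹ * sq a * h) := by rw [← h2]
  _ = sq a * h := by group

private lemma sq_mul' {G : Type*} [Group G] (sq : G → G)
    (hsq : ∀ a, sq a * sq a = a) (huniq : ∀ a b, b * b = a → b = sq a)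
    {a b : G} (hc : a*b = b*a) : sq (a*b) = sq a * sq b := by
  have h1 : b * sq a = sq a * b := sq_comm' sq hsq huniq hc.symm
  have h2 : sq a * sq b = sq b * sq a := sq_comm' sq hsq huniq h1.symm
  refine (huniq _ _ ?_).symm
  calc (sq a * sq b) * (sq a * sq b) = sq a * (sq b * sq a) * sq b := by group
  _ = sq a * (sq a * sq b) * sq b := by rw [h2]
  _ = (sq a * sq a) * (sq b * sq b) := by group
  _ = a * b := by rw [hsq, hsq]

private lemma sq_inv' {G : Type*} [Group G] (sq : G → G)
    (hsq : ∀ a, sq a * sq a = a) (huniq : ∀ a b, b * b = a → b = sq a)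
    (a : G) : sq a⁻¹ = (sq a)⁻¹ := by
  refine (huniq _ _ ?_).symm
  rw [← mul_inv_rev, hsq]

set_option maxHeartbeats 2000000 in
/-- Let `G` be a uniquely 2-divisible metabelian group with `x ∘ y = xy[y,x]^{1/2}`.
Every element `g` of the second center (`[g,x,y] = 1` for all `x,y`) lies in the
center of the loop `(G, ∘)`; in particular `y ∘ (x ∘ g) = (y ∘ x) ∘ g`. -/
theorem second_center_in_circ_center {G : Type*} [Group G] (sq : G → G)
    (hsq : ∀ a, sq a * sq a = a) (huniq : ∀ a b, b * b = a → b = sq a)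
    (hmeta : ∀ a b c d : G,
      (a⁻¹ * b⁻¹ * a * b) * (c⁻¹ * d⁻¹ * c * d) =
        (c⁻¹ * d⁻¹ * c * d) * (a⁻¹ * b⁻¹ * a * b))
    (op : G → G → G) (hop : ∀ x y, op x y = x * y * sq (y⁻¹ * x⁻¹ * y * x))
    (g : G)
    (hg : ∀ x y : G, (g⁻¹ * x⁻¹ * g * x)⁻¹ * y⁻¹ * (g⁻¹ * x⁻¹ * g * x) * y = 1) :
    ∀ x y : G,
      op y (op x g) = op (op y x) g ∧
      op g (op x y) = op (op g x) y ∧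
      op x (op g y) = op (op x g) y := by
  -- [g,a] is central:
  have hzc : ∀ a c : G, (g⁻¹*a⁻¹*g*a) * c = c * (g⁻¹*a⁻¹*g*a) := by
    intro a c
    calc (g⁻¹*a⁻¹*g*a) * c
        = c * ((g⁻¹*a⁻¹*g*a) * ((g⁻¹*a⁻¹*g*a)⁻¹ * c⁻¹ * (g⁻¹*a⁻¹*g*a) * c)) := by group
    _ = c * ((g⁻¹*a⁻¹*g*a) * 1) := by rw [hg a c]
    _ = c * (g⁻¹*a⁻¹*g*a) := by group
  have hzinvc : ∀ a c : G, (g⁻¹*a⁻¹*g*a)⁻¹ * c = c * (g⁻¹*a⁻¹*g*a)⁻¹ :=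
    fun a c => comm_inv_left' (hzc a c)
  -- a ↦ [g,a] is a homomorphism into the center:
  have zmul : ∀ a b : G, g⁻¹*(a*b)⁻¹*g*(a*b) = (g⁻¹*a⁻¹*g*a) * (g⁻¹*b⁻¹*g*b) := by
    intro a b
    calc g⁻¹*(a*b)⁻¹*g*(a*b) = g⁻¹*b⁻¹*g * ((g⁻¹*a⁻¹*g*a) * b) := by group
    _ = g⁻¹*b⁻¹*g * (b * (g⁻¹*a⁻¹*g*a)) := by rw [hzc a b]
    _ = (g⁻¹*b⁻¹*g*b) * (g⁻¹*a⁻¹*g*a) := by group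
    _ = (g⁻¹*a⁻¹*g*a) * (g⁻¹*b⁻¹*g*b) := hzc b _
  -- g commutes with every commutator:
  have hgcomm0 : ∀ a b : G, g * (a*b*a⁻¹*b⁻¹) = (a*b*a⁻¹*b⁻¹) * g := by
    intro a b
    have key : g⁻¹*(a*b)⁻¹*g*(a*b) = g⁻¹*(b*a)⁻¹*g*(b*a) := by
      rw [zmul, zmul]; exact hzc a _
    have C : b⁻¹*(a⁻¹*(g*(a*b))) = a⁻¹*(b⁻¹*(g*(b*a))) := by
      calc b⁻¹*(a⁻¹*(g*(a*b))) = g * (g⁻¹*(a*b)⁻¹*g*(a*b)) := by group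
      _ = g * (g⁻¹*(b*a)⁻¹*g*(b*a)) := by rw [key]
      _ = a⁻¹*(b⁻¹*(g*(b*a))) := by group
    calc g * (a*b*a⁻¹*b⁻¹) = a * (b * (b⁻¹*(a⁻¹*(g*(a*b)))) * a⁻¹ * b⁻¹) := by group
    _ = a * (b * (a⁻¹*(b⁻¹*(g*(b*a)))) * a⁻¹ * b⁻¹) := by rw [C]
    _ = (a*b*a⁻¹*b⁻¹) * g := by group
  have hgcomm : ∀ a b : G, g * (a⁻¹*b⁻¹*a*b) = (a⁻¹*b⁻¹*a*b) * g := by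
    intro a b
    have := hgcomm0 a⁻¹ b⁻¹
    simpa using this
  intro x y
  -- centrality of the square roots of the [g,·]-commutators
  have hsC : ∀ c : G, sq (g⁻¹*x⁻¹*g*x) * c = c * sq (g⁻¹*x⁻¹*g*x) :=
    fun c => (sq_comm' sq hsq huniq (hzc x c).symm).symm
  have hqC : ∀ c : G, sq (g⁻¹*y⁻¹*g*y) * c = c * sq (g⁻¹*y⁻¹*g*y) :=
    fun c => (sq_comm' sq hsq huniq (hzc y c).symm).symm
  have hsinvC : ∀ c : G, (sq (g⁻¹*x⁻¹*g*x))⁻¹ * c = c * (sq (g⁻¹*x⁻¹*g*x))⁻¹ :=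
    fun c => comm_inv_left' (hsC c)
  have hqinvC : ∀ c : G, (sq (g⁻¹*y⁻¹*g*y))⁻¹ * c = c * (sq (g⁻¹*y⁻¹*g*y))⁻¹ :=
    fun c => comm_inv_left' (hqC c)
  have htg : g * sq (x⁻¹*y⁻¹*x*y) = sq (x⁻¹*y⁻¹*x*y) * g :=
    sq_comm' sq hsq huniq (hgcomm x y)
  have hug : g * sq (y⁻¹*x⁻¹*y*x) = sq (y⁻¹*x⁻¹*y*x) * g :=
    sq_comm' sq hsq huniq (hgcomm y x)
  have hv : sq (x⁻¹*g⁻¹*x*g) = (sq (g⁻¹*x⁻¹*g*x))⁻¹ := by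
    rw [show x⁻¹*g⁻¹*x*g = (g⁻¹*x⁻¹*g*x)⁻¹ from by group, sq_inv' sq hsq huniq]
  have hw : sq (y⁻¹*g⁻¹*y*g) = (sq (g⁻¹*y⁻¹*g*y))⁻¹ := by
    rw [show y⁻¹*g⁻¹*y*g = (g⁻¹*y⁻¹*g*y)⁻¹ from by group, sq_inv' sq hsq huniq]
  -- Claim 1
  have claim1 : op y (op x g) = op (op y x) g := by
    have hE1 : (x * g * sq (g⁻¹*x⁻¹*g*x))⁻¹ * y⁻¹ * (x * g * sq (g⁻¹*x⁻¹*g*x)) * y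
        = (x⁻¹*y⁻¹*x*y) * (g⁻¹*y⁻¹*g*y) := by
      calc (x * g * sq (g⁻¹*x⁻¹*g*x))⁻¹ * y⁻¹ * (x * g * sq (g⁻¹*x⁻¹*g*x)) * y
          = (sq (g⁻¹*x⁻¹*g*x))⁻¹ * ((g⁻¹*x⁻¹*y⁻¹*x*g) * sq (g⁻¹*x⁻¹*g*x)) * y := by group
      _ = (sq (g⁻¹*x⁻¹*g*x))⁻¹ * (sq (g⁻¹*x⁻¹*g*x) * (g⁻¹*x⁻¹*y⁻¹*x*g)) * y := by
            rw [← hsC]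
      _ = (g⁻¹ * (x⁻¹*y⁻¹*x*y)) * (y⁻¹*g*y) := by group
      _ = ((x⁻¹*y⁻¹*x*y) * g⁻¹) * (y⁻¹*g*y) := by rw [comm_inv_left' (hgcomm x y)]
      _ = (x⁻¹*y⁻¹*x*y) * (g⁻¹*y⁻¹*g*y) := by group
    have hsqE1 : sq ((x * g * sq (g⁻¹*x⁻¹*g*x))⁻¹ * y⁻¹ * (x * g * sq (g⁻¹*x⁻¹*g*x)) * y)
        = sq (x⁻¹*y⁻¹*x*y) * sq (g⁻¹*y⁻¹*g*y) := by
      rw [hE1, sq_mul' sq hsq huniq (hzc y (x⁻¹*y⁻¹*x*y)).symm]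
    have hgt' : g⁻¹ * (sq (x⁻¹*y⁻¹*x*y))⁻¹ = (sq (x⁻¹*y⁻¹*x*y))⁻¹ * g⁻¹ :=
      (comm_inv_left' (comm_inv_left' htg).symm).symm
    have hE1' : g⁻¹ * (y * x * sq (x⁻¹*y⁻¹*x*y))⁻¹ * g * (y * x * sq (x⁻¹*y⁻¹*x*y))
        = (g⁻¹*x⁻¹*g*x) * (g⁻¹*y⁻¹*g*y) := by
      calc g⁻¹ * (y * x * sq (x⁻¹*y⁻¹*x*y))⁻¹ * g * (y * x * sq (x⁻¹*y⁻¹*x*y))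
          = (g⁻¹ * (sq (x⁻¹*y⁻¹*x*y))⁻¹) * (x⁻¹*y⁻¹*g*y*x*sq (x⁻¹*y⁻¹*x*y)) := by group
      _ = ((sq (x⁻¹*y⁻¹*x*y))⁻¹ * g⁻¹) * (x⁻¹*y⁻¹*g*y*x*sq (x⁻¹*y⁻¹*x*y)) := by rw [hgt']
      _ = (sq (x⁻¹*y⁻¹*x*y))⁻¹ * ((g⁻¹*(y*x)⁻¹*g*(y*x)) * sq (x⁻¹*y⁻¹*x*y)) := by group
      _ = (sq (x⁻¹*y⁻¹*x*y))⁻¹ * (sq (x⁻¹*y⁻¹*x*y) * (g⁻¹*(y*x)⁻¹*g*(y*x))) := by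
            rw [hzc (y*x) (sq (x⁻¹*y⁻¹*x*y))]
      _ = g⁻¹*(y*x)⁻¹*g*(y*x) := by group
      _ = (g⁻¹*y⁻¹*g*y) * (g⁻¹*x⁻¹*g*x) := zmul y x
      _ = (g⁻¹*x⁻¹*g*x) * (g⁻¹*y⁻¹*g*y) := hzc y _
    have hsqE1' : sq (g⁻¹ * (y * x * sq (x⁻¹*y⁻¹*x*y))⁻¹ * g * (y * x * sq (x⁻¹*y⁻¹*x*y)))
        = sq (g⁻¹*x⁻¹*g*x) * sq (g⁻¹*y⁻¹*g*y) := by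
      rw [hE1', sq_mul' sq hsq huniq (hzc x (g⁻¹*y⁻¹*g*y))]
    simp only [hop]
    rw [hsqE1, hsqE1']
    calc y * (x * g * sq (g⁻¹*x⁻¹*g*x)) * (sq (x⁻¹*y⁻¹*x*y) * sq (g⁻¹*y⁻¹*g*y))
        = y*x*g*((sq (g⁻¹*x⁻¹*g*x) * sq (x⁻¹*y⁻¹*x*y)) * sq (g⁻¹*y⁻¹*g*y)) := by group
    _ = y*x*g*((sq (x⁻¹*y⁻¹*x*y) * sq (g⁻¹*x⁻¹*g*x)) * sq (g⁻¹*y⁻¹*g*y)) := by rw [hsC]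
    _ = y*x*((g*sq (x⁻¹*y⁻¹*x*y)) * (sq (g⁻¹*x⁻¹*g*x) * sq (g⁻¹*y⁻¹*g*y))) := by group
    _ = y*x*((sq (x⁻¹*y⁻¹*x*y)*g) * (sq (g⁻¹*x⁻¹*g*x) * sq (g⁻¹*y⁻¹*g*y))) := by rw [htg]
    _ = y * x * sq (x⁻¹*y⁻¹*x*y) * g * (sq (g⁻¹*x⁻¹*g*x) * sq (g⁻¹*y⁻¹*g*y)) := by group
  -- Claim 2
  have claim2 : op g (op x y) = op (op g x) y := by
    have hE2 : (x*y*sq (y⁻¹*x⁻¹*y*x))⁻¹ * g⁻¹ * (x*y*sq (y⁻¹*x⁻¹*y*x)) * g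
        = ((g⁻¹*x⁻¹*g*x)*(g⁻¹*y⁻¹*g*y))⁻¹ := by
      calc (x*y*sq (y⁻¹*x⁻¹*y*x))⁻¹ * g⁻¹ * (x*y*sq (y⁻¹*x⁻¹*y*x)) * g
          = (sq (y⁻¹*x⁻¹*y*x))⁻¹ * ((y⁻¹*x⁻¹*g⁻¹*x*y) * (sq (y⁻¹*x⁻¹*y*x) * g)) := by group
      _ = (sq (y⁻¹*x⁻¹*y*x))⁻¹ * ((y⁻¹*x⁻¹*g⁻¹*x*y) * (g * sq (y⁻¹*x⁻¹*y*x))) := by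
            rw [← hug]
      _ = (sq (y⁻¹*x⁻¹*y*x))⁻¹ * ((g⁻¹*(x*y)⁻¹*g*(x*y))⁻¹ * sq (y⁻¹*x⁻¹*y*x)) := by group
      _ = (sq (y⁻¹*x⁻¹*y*x))⁻¹ * (sq (y⁻¹*x⁻¹*y*x) * (g⁻¹*(x*y)⁻¹*g*(x*y))⁻¹) := by
            rw [hzinvc (x*y) (sq (y⁻¹*x⁻¹*y*x))]
      _ = (g⁻¹*(x*y)⁻¹*g*(x*y))⁻¹ := by group
      _ = ((g⁻¹*x⁻¹*g*x)*(g⁻¹*y⁻¹*g*y))⁻¹ := by rw [zmul]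
    have hsqE2 : sq ((x*y*sq (y⁻¹*x⁻¹*y*x))⁻¹ * g⁻¹ * (x*y*sq (y⁻¹*x⁻¹*y*x)) * g)
        = (sq (g⁻¹*x⁻¹*g*x) * sq (g⁻¹*y⁻¹*g*y))⁻¹ := by
      rw [hE2, sq_inv' sq hsq huniq, sq_mul' sq hsq huniq (hzc x (g⁻¹*y⁻¹*g*y))]
    have hE2' : y⁻¹ * (g*x*(sq (g⁻¹*x⁻¹*g*x))⁻¹)⁻¹ * y * (g*x*(sq (g⁻¹*x⁻¹*g*x))⁻¹)
        = (y⁻¹*x⁻¹*y*x) * (g⁻¹*y⁻¹*g*y)⁻¹ := by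
      calc y⁻¹ * (g*x*(sq (g⁻¹*x⁻¹*g*x))⁻¹)⁻¹ * y * (g*x*(sq (g⁻¹*x⁻¹*g*x))⁻¹)
          = y⁻¹ * ((sq (g⁻¹*x⁻¹*g*x) * (x⁻¹*g⁻¹*y*g*x)) * (sq (g⁻¹*x⁻¹*g*x))⁻¹) := by group
      _ = y⁻¹ * (((x⁻¹*g⁻¹*y*g*x) * sq (g⁻¹*x⁻¹*g*x)) * (sq (g⁻¹*x⁻¹*g*x))⁻¹) := by
            rw [hsC]
      _ = y⁻¹*x⁻¹*(y*(g⁻¹*y⁻¹*g*y)⁻¹)*x := by group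
      _ = (y⁻¹*x⁻¹*y)*((g⁻¹*y⁻¹*g*y)⁻¹*x) := by group
      _ = (y⁻¹*x⁻¹*y)*(x*(g⁻¹*y⁻¹*g*y)⁻¹) := by rw [hzinvc y x]
      _ = (y⁻¹*x⁻¹*y*x) * (g⁻¹*y⁻¹*g*y)⁻¹ := by group
    have hsqE2' : sq (y⁻¹ * (g*x*(sq (g⁻¹*x⁻¹*g*x))⁻¹)⁻¹ * y * (g*x*(sq (g⁻¹*x⁻¹*g*x))⁻¹))
        = sq (y⁻¹*x⁻¹*y*x) * (sq (g⁻¹*y⁻¹*g*y))⁻¹ := by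
      rw [hE2', sq_mul' sq hsq huniq (hzinvc y (y⁻¹*x⁻¹*y*x)).symm, sq_inv' sq hsq huniq]
    simp only [hop]
    rw [hv, hsqE2, hsqE2']
    calc g * (x*y*sq (y⁻¹*x⁻¹*y*x)) * (sq (g⁻¹*x⁻¹*g*x) * sq (g⁻¹*y⁻¹*g*y))⁻¹
        = g*x*((y*(sq (y⁻¹*x⁻¹*y*x)*(sq (g⁻¹*y⁻¹*g*y))⁻¹))*(sq (g⁻¹*x⁻¹*g*x))⁻¹) := by group
    _ = g*x*((sq (g⁻¹*x⁻¹*g*x))⁻¹*(y*(sq (y⁻¹*x⁻¹*y*x)*(sq (g⁻¹*y⁻¹*g*y))⁻¹))) := by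
          rw [← hsinvC]
    _ = g * x * (sq (g⁻¹*x⁻¹*g*x))⁻¹ * y * (sq (y⁻¹*x⁻¹*y*x) * (sq (g⁻¹*y⁻¹*g*y))⁻¹) := by
          group
  -- Claim 3
  have claim3 : op x (op g y) = op (op x g) y := by
    have hE3 : (g*y*(sq (g⁻¹*y⁻¹*g*y))⁻¹)⁻¹ * x⁻¹ * (g*y*(sq (g⁻¹*y⁻¹*g*y))⁻¹) * x
        = (y⁻¹*x⁻¹*y*x)*(g⁻¹*x⁻¹*g*x) := by
      calc (g*y*(sq (g⁻¹*y⁻¹*g*y))⁻¹)⁻¹ * x⁻¹ * (g*y*(sq (g⁻¹*y⁻¹*g*y))⁻¹) * x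
          = sq (g⁻¹*y⁻¹*g*y) * ((y⁻¹*g⁻¹*x⁻¹*g*y) * (sq (g⁻¹*y⁻¹*g*y))⁻¹) * x := by group
      _ = sq (g⁻¹*y⁻¹*g*y) * ((sq (g⁻¹*y⁻¹*g*y))⁻¹ * (y⁻¹*g⁻¹*x⁻¹*g*y)) * x := by
            rw [← hqinvC]
      _ = y⁻¹*((g⁻¹*x⁻¹*g*x)*(x⁻¹*y*x)) := by group
      _ = y⁻¹*((x⁻¹*y*x)*(g⁻¹*x⁻¹*g*x)) := by rw [hzc x (x⁻¹*y*x)]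
      _ = (y⁻¹*x⁻¹*y*x)*(g⁻¹*x⁻¹*g*x) := by group
    have hsqE3 : sq ((g*y*(sq (g⁻¹*y⁻¹*g*y))⁻¹)⁻¹ * x⁻¹ * (g*y*(sq (g⁻¹*y⁻¹*g*y))⁻¹) * x)
        = sq (y⁻¹*x⁻¹*y*x) * sq (g⁻¹*x⁻¹*g*x) := by
      rw [hE3, sq_mul' sq hsq huniq (hzc x (y⁻¹*x⁻¹*y*x)).symm]
    have hE3' : y⁻¹ * (x*g*sq (g⁻¹*x⁻¹*g*x))⁻¹ * y * (x*g*sq (g⁻¹*x⁻¹*g*x))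
        = (g⁻¹*y⁻¹*g*y)⁻¹*(y⁻¹*x⁻¹*y*x) := by
      calc y⁻¹ * (x*g*sq (g⁻¹*x⁻¹*g*x))⁻¹ * y * (x*g*sq (g⁻¹*x⁻¹*g*x))
          = y⁻¹ * ((sq (g⁻¹*x⁻¹*g*x))⁻¹ * (g⁻¹*x⁻¹*y*x*g)) * sq (g⁻¹*x⁻¹*g*x) := by group
      _ = y⁻¹ * ((g⁻¹*x⁻¹*y*x*g) * (sq (g⁻¹*x⁻¹*g*x))⁻¹) * sq (g⁻¹*x⁻¹*g*x) := by
            rw [hsinvC]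
      _ = (y⁻¹*g⁻¹*y*g)*((g⁻¹*(y⁻¹*x⁻¹*y*x))*g) := by group
      _ = (y⁻¹*g⁻¹*y*g)*(((y⁻¹*x⁻¹*y*x)*g⁻¹)*g) := by rw [comm_inv_left' (hgcomm y x)]
      _ = (g⁻¹*y⁻¹*g*y)⁻¹*(y⁻¹*x⁻¹*y*x) := by group
    have hsqE3' : sq (y⁻¹ * (x*g*sq (g⁻¹*x⁻¹*g*x))⁻¹ * y * (x*g*sq (g⁻¹*x⁻¹*g*x)))
        = (sq (g⁻¹*y⁻¹*g*y))⁻¹ * sq (y⁻¹*x⁻¹*y*x) := by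
      rw [hE3', sq_mul' sq hsq huniq (hzinvc y (y⁻¹*x⁻¹*y*x)), sq_inv' sq hsq huniq]
    simp only [hop]
    rw [hw, hsqE3, hsqE3']
    calc x * (g*y*(sq (g⁻¹*y⁻¹*g*y))⁻¹) * (sq (y⁻¹*x⁻¹*y*x) * sq (g⁻¹*x⁻¹*g*x))
        = x*g*((y*((sq (g⁻¹*y⁻¹*g*y))⁻¹*sq (y⁻¹*x⁻¹*y*x)))*sq (g⁻¹*x⁻¹*g*x)) := by group
    _ = x*g*(sq (g⁻¹*x⁻¹*g*x)*(y*((sq (g⁻¹*y⁻¹*g*y))⁻¹*sq (y⁻¹*x⁻¹*y*x)))) := by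
          rw [← hsC]
    _ = x * g * sq (g⁻¹*x⁻¹*g*x) * y * ((sq (g⁻¹*y⁻¹*g*y))⁻¹ * sq (y⁻¹*x⁻¹*y*x)) := by
          group
  exact ⟨claim1, claim2, claim3⟩
end

section
/- Let G be a uniquely 2-divisible group of nilpotency class exactly 3, with operation x ∘ y = xy[y,x]^{1/2}. Then the center of the loop (G, ∘) equals the second center ζ²(G) of G; in particular, if g satisfies g ∘ (x ∘ y) = x ∘ (y ∘ g) for all x, y ∈ G, then [g,x,y] = 1 for all x, y ∈ G. -/
namespace CCz
variable {G : Type*} [Group G]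

def K (a b : G) : G := a⁻¹ * b⁻¹ * a * b

lemma K_mul_left (a b c : G) : K (a * b) c = b⁻¹ * K a c * b * K b c := by
  simp only [K]; group

lemma K_mul_right (a b c : G) : K a (b * c) = K a c * (c⁻¹ * K a b * c) := by
  simp only [K]; group

lemma conj_eq (u g : G) : g⁻¹ * u * g = u * K u g := by simp only [K]; group

lemma K_swap (a b : G) : K b a = (K a b)⁻¹ := by simp only [K]; group

lemma K_one_right (a : G) : K a 1 = 1 := by simp [K]

lemma K_one_left (a : G) : K 1 a = 1 := by simp [K]

lemma K_inv_left_pure (u c : G) : K u⁻¹ c = u * (K u c)⁻¹ * u⁻¹ := by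
  simp only [K]; group

lemma K_binv_pure (a b : G) : K a b⁻¹ = b * (K a b)⁻¹ * b⁻¹ := by
  simp only [K]; group

lemma K_conj_pure (h v c : G) : K (h * v * h⁻¹) c = h * K v (h⁻¹ * c * h) * h⁻¹ := by
  simp only [K]; group

lemma hall_witt (a b c : G) :
    (b⁻¹ * K (K a b⁻¹) c * b) * (c⁻¹ * K (K b c⁻¹) a * c) * (a⁻¹ * K (K c a⁻¹) b * a) = 1 := by
  simp only [K]; group

lemma commute_of_K {a b : G} (h : K a b = 1) : Commute a b := by
  have h2 : b * a * K a b = b * a := by rw [h, mul_one]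
  show a * b = b * a
  simpa [K, mul_assoc] using h2

lemma K_of_commute {a b : G} (h : Commute a b) : K a b = 1 := by
  unfold K
  simp only [mul_assoc]
  rw [h.eq]
  simp

lemma conjcomm {t P : G} (h : Commute t P) : t⁻¹ * P * t = P := by
  rw [h.inv_left.eq, mul_assoc, inv_mul_cancel, mul_one]

lemma conjcomm' {t P : G} (h : Commute t P) : t * P * t⁻¹ = P := by
  rw [h.eq, mul_assoc, mul_inv_cancel, mul_one]

lemma sqprod {p q : G} (h : Commute p q) : (p * q) * (p * q) = (p * p) * (q * q) := by
  calc (p * q) * (p * q) = p * (q * p) * q := by group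
    _ = p * (p * q) * q := by rw [← h.eq]
    _ = (p * p) * (q * q) := by group

end CCz

open CCz

/-- Let `G` be a uniquely 2-divisible group of nilpotency class 3 (all weight-4
commutators vanish) with `x ∘ y = xy[y,x]^{1/2}`.  Then the center of `(G, ∘)`
equals the second center `ζ²(G) = {g : [g,x,y] = 1 ∀ x,y}`; in particular, if
`g ∘ (x ∘ y) = x ∘ (y ∘ g)` for all `x, y`, then `[g,x,y] = 1` for all `x, y`. -/
theorem circ_center_eq_second_center {G : Type*} [Group G] (sq : G → G)
    (hsq : ∀ a, sq a * sq a = a) (huniq : ∀ a b, b * b = a → b = sq a)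
    (hclass3 : ∀ a b c d : G,
      ((a⁻¹ * b⁻¹ * a * b)⁻¹ * c⁻¹ * (a⁻¹ * b⁻¹ * a * b) * c)⁻¹ * d⁻¹ *
        ((a⁻¹ * b⁻¹ * a * b)⁻¹ * c⁻¹ * (a⁻¹ * b⁻¹ * a * b) * c) * d = 1)
    (op : G → G → G) (hop : ∀ x y, op x y = x * y * sq (y⁻¹ * x⁻¹ * y * x)) :
    ({g : G | ∀ x y : G,
        op g (op x y) = op (op g x) y ∧
        op x (op g y) = op (op x g) y ∧
        op x (op y g) = op (op x y) g} =
      {g : G | ∀ x y : G,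
        (g⁻¹ * x⁻¹ * g * x)⁻¹ * y⁻¹ * (g⁻¹ * x⁻¹ * g * x) * y = 1}) ∧
    (∀ g : G, (∀ x y : G, op g (op x y) = op x (op y g)) →
      ∀ x y : G, (g⁻¹ * x⁻¹ * g * x)⁻¹ * y⁻¹ * (g⁻¹ * x⁻¹ * g * x) * y = 1) := by
  -- repackaged hypotheses
  have hop' : ∀ a b : G, op a b = a * b * sq (K b a) := hop
  have hcen : ∀ a b c z : G, Commute (K (K a b) c) z :=
    fun a b c z => commute_of_K (hclass3 a b c z)
  -- square-root calculus
  have hone : sq 1 = 1 := (huniq 1 1 (one_mul 1)).symm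
  have hinv : ∀ a : G, sq a⁻¹ = (sq a)⁻¹ :=
    fun a => (huniq a⁻¹ (sq a)⁻¹ (by rw [← mul_inv_rev, hsq])).symm
  have hsqconj : ∀ g a : G, g⁻¹ * sq a * g = sq (g⁻¹ * a * g) := by
    intro g a
    refine huniq _ _ ?_
    calc g⁻¹ * sq a * g * (g⁻¹ * sq a * g) = g⁻¹ * (sq a * sq a) * g := by group
      _ = g⁻¹ * a * g := by rw [hsq]
  have csq : ∀ z a : G, Commute z a → Commute z (sq a) := by
    intro z a h
    have h1 : z⁻¹ * sq a * z = sq a := by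
      rw [hsqconj z a, conjcomm h]
    have h2 := congrArg (z * ·) h1
    simp only [← mul_assoc, mul_inv_cancel, one_mul] at h2
    exact h2.symm
  have smul : ∀ a b : G, Commute a b → sq (a * b) = sq a * sq b := by
    intro a b h
    have hc : Commute (sq a) (sq b) := (csq _ _ (csq _ _ h).symm).symm
    refine (huniq _ _ ?_).symm
    calc sq a * sq b * (sq a * sq b) = sq a * (sq b * sq a) * sq b := by group
      _ = sq a * (sq a * sq b) * sq b := by rw [← hc.eq]
      _ = (sq a * sq a) * (sq b * sq b) := by group
      _ = a * b := by rw [hsq, hsq]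
  -- commutator calculus in class 3
  have Kur : ∀ a b x y : G, K (K a b) (x * y) = K (K a b) y * K (K a b) x := by
    intro a b x y
    rw [K_mul_right, conjcomm (hcen a b x y).symm]
  have Kur1 : ∀ a b x : G, K (K a b) x⁻¹ = (K (K a b) x)⁻¹ := by
    intro a b x
    have h1 := Kur a b x x⁻¹
    rw [mul_inv_cancel, K_one_right] at h1
    exact eq_inv_of_mul_eq_one_left h1.symm
  have Kil : ∀ a b c : G, K ((K a b)⁻¹) c = (K (K a b) c)⁻¹ := by
    intro a b c
    rw [K_inv_left_pure, conjcomm' (hcen a b c (K a b)).inv_left.symm]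
  have KK1 : ∀ a b c d : G, K (K a b) (K c d) = 1 := by
    intro a b c d
    have e : K c d = c⁻¹ * d⁻¹ * c * d := rfl
    rw [e, Kur a b _ d, Kur a b _ c, Kur a b c⁻¹ d⁻¹, Kur1, Kur1]
    have h1 := (hcen a b c ((K (K a b) d)⁻¹)).eq
    calc K (K a b) d * (K (K a b) c * ((K (K a b) d)⁻¹ * (K (K a b) c)⁻¹))
        = K (K a b) d * ((K (K a b) c * (K (K a b) d)⁻¹) * (K (K a b) c)⁻¹) := by group
      _ = K (K a b) d * (((K (K a b) d)⁻¹ * K (K a b) c) * (K (K a b) c)⁻¹) := by rw [h1]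
      _ = 1 := by group
  have KKc : ∀ a b c d : G, Commute (K a b) (K c d) := fun a b c d => commute_of_K (KK1 a b c d)
  have cKs : ∀ a b c d : G, Commute (K a b) (sq (K c d)) := fun a b c d => csq _ _ (KKc a b c d)
  have css : ∀ a b c d : G, Commute (sq (K a b)) (sq (K c d)) :=
    fun a b c d => csq _ _ (cKs c d a b).symm
  have cenS : ∀ a b c z : G, Commute (sq (K (K a b) c)) z :=
    fun a b c z => (csq z _ (hcen a b c z).symm).symm
  have cenQ : ∀ a b c z : G, Commute (sq (sq (K (K a b) c))) z :=
    fun a b c z => (csq z _ (cenS a b c z).symm).symm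
  have sKconj : ∀ a b x : G, x⁻¹ * sq (K a b) * x = sq (K a b) * sq (K (K a b) x) := by
    intro a b x
    rw [hsqconj x (K a b), conj_eq (K a b) x, smul _ _ (hcen a b x (K a b)).symm]
  have KsK : ∀ a b x : G, K (sq (K a b)) x = sq (K (K a b) x) := by
    intro a b x
    have h1 := sKconj a b x
    calc K (sq (K a b)) x = (sq (K a b))⁻¹ * (x⁻¹ * sq (K a b) * x) := by
          simp only [K]; group
      _ = (sq (K a b))⁻¹ * (sq (K a b) * sq (K (K a b) x)) := by rw [h1]
      _ = sq (K (K a b) x) := by group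
  have KxsK : ∀ x a b : G, K x (sq (K a b)) = (sq (K (K a b) x))⁻¹ := by
    intro x a b; rw [K_swap, KsK]
  have sKswap : ∀ a b z : G, sq (K a b) * z = z * (sq (K a b) * sq (K (K a b) z)) := by
    intro a b z
    have h1 := sKconj a b z
    calc sq (K a b) * z = z * (z⁻¹ * sq (K a b) * z) := by group
      _ = z * (sq (K a b) * sq (K (K a b) z)) := by rw [h1]
  have Kbinv : ∀ a b c : G, K (K a b⁻¹) c = (K (K a b) c)⁻¹ := by
    intro a b c
    rw [K_binv_pure, K_conj_pure, Kil]
    have h3 : K (K a b) (b⁻¹ * c * b) = K (K a b) c := by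
      rw [Kur a b _ b, Kur a b b⁻¹ c, Kur1]
      rw [(hcen a b c ((K (K a b) b)⁻¹)).eq]
      group
    rw [h3, conjcomm' (hcen a b c b).inv_left.symm]
  have jac : ∀ a b c : G, K (K a b) c * K (K b c) a * K (K c a) b = 1 := by
    intro a b c
    have h := hall_witt a b c
    rw [Kbinv a b c, Kbinv b c a, Kbinv c a b,
        conjcomm (hcen a b c b).inv_left.symm,
        conjcomm (hcen b c a c).inv_left.symm,
        conjcomm (hcen c a b a).inv_left.symm] at h
    have h2 := congrArg Inv.inv h
    simp only [mul_inv_rev, inv_inv, inv_one] at h2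
    calc K (K a b) c * K (K b c) a * K (K c a) b
        = (K (K b c) a * K (K a b) c) * K (K c a) b := by rw [(hcen a b c (K (K b c) a)).eq]
      _ = K (K c a) b * (K (K b c) a * K (K a b) c) := by
          rw [← (hcen c a b (K (K b c) a * K (K a b) c)).eq]
      _ = 1 := h2
  have antis : ∀ a b c : G, K (K b a) c = (K (K a b) c)⁻¹ := by
    intro a b c; rw [K_swap a b, Kil]
  -- normal forms
  have cA1 : ∀ g x y : G, K (x * y * sq (K y x)) g
      = K x g * (K (K x g) y * (K y g * sq (K (K y x) g))) := by
    intro g x y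
    rw [K_mul_left (x*y) (sq (K y x)) g, KsK y x g, K_mul_left x y g, conj_eq (K x g) y,
        conjcomm (((cKs x g y x).symm.mul_right (hcen x g y (sq (K y x))).symm).mul_right
          (cKs y g y x).symm)]
    simp only [mul_assoc]
  have N1 : ∀ g x y : G, op g (op x y) =
      g * (x * (y * (sq (K y x) * (sq (K x g) * (sq (K (K x g) y) *
        (sq (K y g) * sq (sq (K (K y x) g)))))))) := by
    intro g x y
    rw [hop' x y, hop' g (x * y * sq (K y x)), cA1 g x y,
        smul _ _ ((hcen x g y (K x g)).symm.mul_right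
          ((KKc x g y g).mul_right (cenS y x g (K x g)).symm)),
        smul _ _ (hcen x g y (K y g * sq (K (K y x) g))),
        smul _ _ (cenS y x g (K y g)).symm]
    simp only [mul_assoc]
  have cA2 : ∀ g x y : G, K y (g * x * sq (K x g))
      = (sq (K (K x g) y))⁻¹ * (K y x * (K y g * K (K y g) x)) := by
    intro g x y
    rw [K_mul_right y (g*x) (sq (K x g)), KxsK y x g, K_mul_right y g x, conj_eq (K y g) x,
        conjcomm ((cKs y x x g).symm.mul_right
          ((cKs y g x g).symm.mul_right (hcen y g x (sq (K x g))).symm))]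
  have N2 : ∀ g x y : G, op (op g x) y =
      g * (x * (y * (sq (K x g) * (sq (K (K x g) y) * ((sq (sq (K (K x g) y)))⁻¹ *
        (sq (K y x) * (sq (K y g) * sq (K (K y g) x)))))))) := by
    intro g x y
    rw [hop' g x, hop' (g * x * sq (K x g)) y, cA2 g x y,
        smul _ _ (cenS x g y (K y x * (K y g * K (K y g) x))).inv_left,
        hinv (sq (K (K x g) y)),
        smul _ _ ((KKc y x y g).mul_right (hcen y g x (K y x)).symm),
        smul _ _ (hcen y g x (K y g)).symm,
        mul_assoc (g * x) (sq (K x g)) y, sKswap x g y]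
    simp only [mul_assoc]
  have cA3 : ∀ g x y : G, K (g * y * sq (K y g)) x
      = K g x * (K (K g x) y * (K y x * sq (K (K y g) x))) := by
    intro g x y
    rw [K_mul_left (g*y) (sq (K y g)) x, KsK y g x, K_mul_left g y x, conj_eq (K g x) y,
        conjcomm (((cKs g x y g).symm.mul_right (hcen g x y (sq (K y g))).symm).mul_right
          (cKs y x y g).symm)]
    simp only [mul_assoc]
  have N3 : ∀ g x y : G, op x (op g y) =
      x * (g * (y * (sq (K y g) * (sq (K g x) * (sq (K (K g x) y) *
        (sq (K y x) * sq (sq (K (K y g) x)))))))) := by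
    intro g x y
    rw [hop' g y, hop' x (g * y * sq (K y g)), cA3 g x y,
        smul _ _ ((hcen g x y (K g x)).symm.mul_right
          ((KKc g x y x).mul_right (cenS y g x (K g x)).symm)),
        smul _ _ (hcen g x y (K y x * sq (K (K y g) x))),
        smul _ _ (cenS y g x (K y x)).symm]
    simp only [mul_assoc]
  have cA4 : ∀ g x y : G, K y (x * g * sq (K g x))
      = (sq (K (K g x) y))⁻¹ * (K y g * (K y x * K (K y x) g)) := by
    intro g x y
    rw [K_mul_right y (x*g) (sq (K g x)), KxsK y g x, K_mul_right y x g, conj_eq (K y x) g,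
        conjcomm ((cKs y g g x).symm.mul_right
          ((cKs y x g x).symm.mul_right (hcen y x g (sq (K g x))).symm))]
  have N4 : ∀ g x y : G, op (op x g) y =
      x * (g * (y * (sq (K g x) * (sq (K (K g x) y) * ((sq (sq (K (K g x) y)))⁻¹ *
        (sq (K y g) * (sq (K y x) * sq (K (K y x) g)))))))) := by
    intro g x y
    rw [hop' x g, hop' (x * g * sq (K g x)) y, cA4 g x y,
        smul _ _ (cenS g x y (K y g * (K y x * K (K y x) g))).inv_left,
        hinv (sq (K (K g x) y)),
        smul _ _ ((KKc y g y x).mul_right (hcen y x g (K y g)).symm),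
        smul _ _ (hcen y x g (K y x)).symm,
        mul_assoc (x * g) (sq (K g x)) y, sKswap g x y]
    simp only [mul_assoc]
  have cA5 : ∀ x y g : G, K (y * g * sq (K g y)) x
      = K y x * (K (K y x) g * (K g x * sq (K (K g y) x))) := by
    intro x y g
    rw [K_mul_left (y*g) (sq (K g y)) x, KsK g y x, K_mul_left y g x, conj_eq (K y x) g,
        conjcomm (((cKs y x g y).symm.mul_right (hcen y x g (sq (K g y))).symm).mul_right
          (cKs g x g y).symm)]
    simp only [mul_assoc]
  have N5 : ∀ x y g : G, op x (op y g) =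
      x * (y * (g * (sq (K g y) * (sq (K y x) * (sq (K (K y x) g) *
        (sq (K g x) * sq (sq (K (K g y) x)))))))) := by
    intro x y g
    rw [hop' y g, hop' x (y * g * sq (K g y)), cA5 x y g,
        smul _ _ ((hcen y x g (K y x)).symm.mul_right
          ((KKc y x g x).mul_right (cenS g y x (K y x)).symm)),
        smul _ _ (hcen y x g (K g x * sq (K (K g y) x))),
        smul _ _ (cenS g y x (K g x)).symm]
    simp only [mul_assoc]
  have cA6 : ∀ x y g : G, K g (x * y * sq (K y x))
      = (sq (K (K y x) g))⁻¹ * (K g y * (K g x * K (K g x) y)) := by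
    intro x y g
    rw [K_mul_right g (x*y) (sq (K y x)), KxsK g y x, K_mul_right g x y, conj_eq (K g x) y,
        conjcomm ((cKs g y y x).symm.mul_right
          ((cKs g x y x).symm.mul_right (hcen g x y (sq (K y x))).symm))]
  have N6 : ∀ x y g : G, op (op x y) g =
      x * (y * (g * (sq (K y x) * (sq (K (K y x) g) * ((sq (sq (K (K y x) g)))⁻¹ *
        (sq (K g y) * (sq (K g x) * sq (K (K g x) y)))))))) := by
    intro x y g
    rw [hop' x y, hop' (x * y * sq (K y x)) g, cA6 x y g,
        smul _ _ (cenS y x g (K g y * (K g x * K (K g x) y))).inv_left,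
        hinv (sq (K (K y x) g)),
        smul _ _ ((KKc g y g x).mul_right (hcen g x y (K g y)).symm),
        smul _ _ (hcen g x y (K g x)).symm,
        mul_assoc (x * y) (sq (K y x)) g, sKswap y x g]
    simp only [mul_assoc]
  -- the key implication: condition (iii) forces membership in the second center
  have iii_imp : ∀ g : G, (∀ x y : G, op x (op y g) = op (op x y) g) →
      ∀ x y : G, K (K g x) y = 1 := by
    intro g h x y
    have hN := (N5 x y g).symm.trans ((h x y).trans (N6 x y g))
    have hPQ := mul_left_cancel (mul_left_cancel (mul_left_cancel hN))
    rw [((cenQ y x g (sq (K g y))).inv_left).left_comm,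
        ((cenQ y x g (sq (K g x))).inv_left).left_comm,
        (cenS y x g (sq (K g y))).left_comm,
        (css y x g y).left_comm] at hPQ
    have hE := mul_left_cancel (mul_left_cancel (mul_left_cancel (mul_left_cancel hPQ)))
    -- hE : sq (sq (K (K g y) x)) = (sq (sq (K (K y x) g)))⁻¹ * sq (K (K g x) y)
    have hE2 : sq (K (K g y) x) = (sq (K (K y x) g))⁻¹ * K (K g x) y := by
      have h2 := congrArg (fun z : G => z * z) hE
      rw [hsq, sqprod ((cenQ y x g (sq (K (K g x) y))).inv_left),
          ← mul_inv_rev, hsq, hsq] at h2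
      exact h2
    have hE4 : K (K g y) x = (K (K y x) g)⁻¹ * (K (K g x) y * K (K g x) y) := by
      have h2 := congrArg (fun z : G => z * z) hE2
      rw [hsq, sqprod ((cenS y x g (K (K g x) y)).inv_left),
          ← mul_inv_rev, hsq] at h2
      exact h2
    have hj := jac g x y
    rw [antis y x g, antis g y x] at hj
    have hD : K (K g x) y * (K (K y x) g)⁻¹ = K (K g y) x := by
      rw [← mul_inv_eq_one]
      simpa [mul_assoc] using hj
    have hfin : K (K g x) y * (K (K y x) g)⁻¹
        = (K (K g x) y * (K (K y x) g)⁻¹) * K (K g x) y := by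
      calc K (K g x) y * (K (K y x) g)⁻¹ = K (K g y) x := hD
        _ = (K (K y x) g)⁻¹ * (K (K g x) y * K (K g x) y) := hE4
        _ = (K (K g x) y * (K (K y x) g)⁻¹) * K (K g x) y := by
            rw [← mul_assoc, ← (hcen g x y ((K (K y x) g)⁻¹)).eq]
    have := mul_left_cancel (show (K (K g x) y * (K (K y x) g)⁻¹) * 1
        = (K (K g x) y * (K (K y x) g)⁻¹) * K (K g x) y by rw [mul_one, ← hfin])
    exact this.symm
  -- membership in the second center gives all three nucleus conditions
  have hsolve : ∀ g : G, (∀ u v : G, K (K g u) v = 1) → ∀ x y : G,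
      (op g (op x y) = op (op g x) y ∧
       op x (op g y) = op (op x g) y ∧
       op x (op y g) = op (op x y) g) := by
    intro g hz
    have hAgb : ∀ a b : G, K (K a g) b = 1 := by
      intro a b; rw [antis g a b, hz a b, inv_one]
    have hAbg : ∀ a b : G, K (K a b) g = 1 := by
      intro a b
      have hj := jac a b g
      rw [hAgb b a, hz a b] at hj
      simpa using hj
    intro x y
    refine ⟨?_, ?_, ?_⟩
    · rw [N1 g x y, N2 g x y]
      simp only [hAgb, hAbg, hz, hone, inv_one, one_mul, mul_one]
      rw [(css x g y x).left_comm]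
    · rw [N3 g x y, N4 g x y]
      simp only [hAgb, hAbg, hz, hone, inv_one, one_mul, mul_one]
      rw [(css g x y g).left_comm]
    · rw [N5 x y g, N6 x y g]
      simp only [hAgb, hAbg, hz, hone, inv_one, one_mul, mul_one]
      rw [(css y x g y).left_comm]
  constructor
  · ext g
    simp only [Set.mem_setOf_eq]
    constructor
    · intro h x y
      exact iii_imp g (fun a b => (h a b).2.2) x y
    · intro hz x y
      exact hsolve g hz x y
  · intro g h x y
    have h1 : ∀ z : G, op 1 z = z := by
      intro z
      rw [hop' 1 z, K_one_right z, hone, mul_one, one_mul]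
    have hcomm : ∀ z : G, op g z = op z g := by
      intro z
      have hh := h 1 z
      rwa [h1 z, h1 (op z g)] at hh
    have hiii : ∀ a b : G, op a (op b g) = op (op a b) g :=
      fun a b => (h a b).symm.trans (hcomm (op a b))
    exact iii_imp g hiii x y
end
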